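/- arXiv:1407.0263 — 8 statements merged into one kernel-verified Lean document; each statement's English description precedes it below -/
import Mathlib

section
/- Let n ≥ 1, let E be a real normed vector space, let U ⊆ E be open carrying a measure μ, and let L̄ : ℝ → Matrix (Fin n) (Fin n) ℝ → (E →L[ℝ] Matrix (Fin n) (Fin n) ℝ) → ℝ. Let χ, Λ : U → Matrix (Fin n) (Fin n) ℝ be differentiable on U with Λ(m) invertible for every m ∈ U, let v : U → Matrix (Fin n) (Fin n) ℝ, and let γ be a matrix-valued one-form on U. Assume right invariance of L̄ under the values of Λ: for all t ∈ ℝ, all matrices a, all B : E →L[ℝ] Matrix (Fin n) (Fin n) ℝ and all m ∈ U, L̄(t, a * Λ(m), fun w => (B w) * Λ(m)) = L̄(t, a, B). Then for every t ∈ ℝ, ∫_U L̄(t, v(m) * Λ(m), fun w => d(fun x => χ(x)*Λ(x))(m) w − (χ(m)*Λ(m)) * (θ_Λ(γ)(m) w)) dμ(m) = ∫_U L̄(t, v(m), fun w => dχ(m) w − χ(m) * (γ(m) w)) dμ(m); that is, the instantaneous Lagrangian L^𝓛(t, χ, v, γ) := ∫_U L̄(t, v(m), dχ(m) − χ(m)·γ(m))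 dμ satisfies the gauge invariance L^𝓛(t, χΛ, vΛ, θ_Λ(γ)) = L^𝓛(t, χ, v, γ). -/
open MeasureTheory

attribute [local instance] Matrix.normedAddCommGroup Matrix.normedSpace

/-- Right multiplication by a fixed matrix, as a continuous linear map. -/
noncomputable def mulR {n : ℕ} (A : Matrix (Fin n) (Fin n) ℝ) :
    Matrix (Fin n) (Fin n) ℝ →L[ℝ] Matrix (Fin n) (Fin n) ℝ :=
  LinearMap.toContinuousLinearMap (LinearMap.mulRight ℝ A)

/-- Left multiplication by a fixed matrix, as a continuous linear map. -/
noncomputable def mulL {n : ℕ} (A : Matrix (Fin n) (Fin n) ℝ) :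
    Matrix (Fin n) (Fin n) ℝ →L[ℝ] Matrix (Fin n) (Fin n) ℝ :=
  LinearMap.toContinuousLinearMap (LinearMap.mulLeft ℝ A)

/-- Gauge invariance of the instantaneous Lagrangian
`L^𝓛(t, χ, v, γ) = ∫_U L̄(t, v(m), dχ(m) − χ(m)·γ(m)) dμ`:
if `L̄` is right invariant under the values of `Λ`, then
`L^𝓛(t, χΛ, vΛ, θ_Λ(γ)) = L^𝓛(t, χ, v, γ)`, where
`θ_Λ(γ)(m)(w) = Λ(m)⁻¹ (γ(m) w) Λ(m) + Λ(m)⁻¹ (dΛ(m) w)`. -/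
theorem instantaneous_lagrangian_gauge_invariance
    {n : ℕ} (hn : 1 ≤ n)
    {E : Type*} [NormedAddCommGroup E] [NormedSpace ℝ E]
    [MeasurableSpace E] [BorelSpace E]
    (U : Set E) (hU : IsOpen U) (μ : Measure E)
    (Lb : ℝ → Matrix (Fin n) (Fin n) ℝ → (E →L[ℝ] Matrix (Fin n) (Fin n) ℝ) → ℝ)
    (χ Λ v : E → Matrix (Fin n) (Fin n) ℝ)
    (γ : E → (E →L[ℝ] Matrix (Fin n) (Fin n) ℝ))
    (hχ : ∀ m ∈ U, DifferentiableAt ℝ χ m)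
    (hΛ : ∀ m ∈ U, DifferentiableAt ℝ Λ m)
    (hΛinv : ∀ m ∈ U, IsUnit (Λ m))
    (hLinv : ∀ (t : ℝ) (a : Matrix (Fin n) (Fin n) ℝ)
      (B : E →L[ℝ] Matrix (Fin n) (Fin n) ℝ), ∀ m ∈ U,
      Lb t (a * Λ m) ((mulR (Λ m)).comp B) = Lb t a B)
    (t : ℝ) :
    ∫ m in U, Lb t (v m * Λ m)
        (fderiv ℝ (fun x => χ x * Λ x) m -
          (mulL (χ m * Λ m)).comp
            ((mulR (Λ m)).comp ((mulL ((Λ m)⁻¹)).comp (γ m)) +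
              (mulL ((Λ m)⁻¹)).comp (fderiv ℝ Λ m))) ∂μ
      = ∫ m in U, Lb t (v m) (fderiv ℝ χ m - (mulL (χ m)).comp (γ m)) ∂μ := by
  apply setIntegral_congr_fun hU.measurableSet
  intro m hm
  have hbil : IsBoundedBilinearMap ℝ (fun p : (Matrix (Fin n) (Fin n) ℝ) × (Matrix (Fin n) (Fin n) ℝ) => p.1 * p.2) := by
    let bil : Matrix (Fin n) (Fin n) ℝ →L[ℝ] Matrix (Fin n) (Fin n) ℝ →L[ℝ] Matrix (Fin n) (Fin n) ℝ :=
      LinearMap.toContinuousLinearMap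
        ({ toFun := fun A => mulL A
           map_add' := by intro a b; ext x; simp [mulL, add_mul]
           map_smul' := by intro c a; ext x; simp [mulL, smul_mul_assoc, Matrix.smul_apply, smul_eq_mul] } :
          Matrix (Fin n) (Fin n) ℝ →ₗ[ℝ] (Matrix (Fin n) (Fin n) ℝ →L[ℝ] Matrix (Fin n) (Fin n) ℝ))
    have := bil.isBoundedBilinearMap
    convert this using 2 <;> rfl
  have hderiv : HasFDerivAt (fun x => χ x * Λ x)
      ((hbil.deriv (χ m, Λ m)).comp ((fderiv ℝ χ m).prod (fderiv ℝ Λ m))) m :=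
    (hbil.hasFDerivAt (χ m, Λ m)).comp (f := fun x => (χ x, Λ x)) m
      ((hχ m hm).hasFDerivAt.prodMk ((hΛ m hm).hasFDerivAt))
  have hd : ∀ w, fderiv ℝ (fun x => χ x * Λ x) m w
      = fderiv ℝ χ m w * Λ m + χ m * fderiv ℝ Λ m w := by
    intro w
    refine (congrArg (fun L => L w) (HasFDerivAt.fderiv hderiv)).trans ?_
    exact add_comm _ _
  have hinv : Λ m * (Λ m)⁻¹ = 1 :=
    Matrix.mul_nonsing_inv _ ((Matrix.isUnit_iff_isUnit_det _).mp (hΛinv m hm))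
  have key : (fderiv ℝ (fun x => χ x * Λ x) m -
      (mulL (χ m * Λ m)).comp
        ((mulR (Λ m)).comp ((mulL ((Λ m)⁻¹)).comp (γ m)) +
          (mulL ((Λ m)⁻¹)).comp (fderiv ℝ Λ m)))
      = (mulR (Λ m)).comp (fderiv ℝ χ m - (mulL (χ m)).comp (γ m)) := by
    refine ContinuousLinearMap.ext fun w => ?_
    simp only [ContinuousLinearMap.sub_apply, ContinuousLinearMap.add_apply,
      ContinuousLinearMap.comp_apply, mulR, mulL,
      LinearMap.coe_toContinuousLinearMap', LinearMap.mulRight_apply, LinearMap.mulLeft_apply,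
      hd w]
    have h1 : χ m * Λ m * ((Λ m)⁻¹ * γ m w * Λ m) = χ m * γ m w * Λ m := by
      rw [show χ m * Λ m * ((Λ m)⁻¹ * γ m w * Λ m)
          = χ m * (Λ m * (Λ m)⁻¹) * γ m w * Λ m by noncomm_ring]
      rw [hinv, mul_one]
    have h2 : χ m * Λ m * ((Λ m)⁻¹ * fderiv ℝ Λ m w) = χ m * fderiv ℝ Λ m w := by
      rw [show χ m * Λ m * ((Λ m)⁻¹ * fderiv ℝ Λ m w)
          = χ m * (Λ m * (Λ m)⁻¹) * fderiv ℝ Λ m w by noncomm_ring]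
      rw [hinv, mul_one]
    rw [mul_add, h1, h2]
    noncomm_ring
  dsimp only
  rw [key, hLinv t (v m) _ m hm]
end

section
/- Let d, n ≥ 1 and let U be an open subset of EuclideanSpace ℝ (Fin d), equipped with Lebesgue measure. For each i : Fin d let Wᵢ : EuclideanSpace ℝ (Fin d) → Matrix (Fin n) (Fin n) ℝ be continuously differentiable on U and let σᵢ : EuclideanSpace ℝ (Fin d) → Matrix (Fin n) (Fin n) ℝ be continuous on U. Then the following are equivalent: (a) for every smooth η : EuclideanSpace ℝ (Fin d) → Matrix (Fin n) (Fin n) ℝ whose support is compact and contained in U, ∫_U Σ_{i : Fin d} ⟨Wᵢ(x), ∂ᵢη(x) − ⁅σᵢ(x), η(x)⁆⟩ dx = 0, where ∂ᵢη(x) := dη(x)(eᵢ) with eᵢ the standard basis; (b) for every x ∈ U, Σ_{i : Fin d} ∂ᵢWᵢ(x) + Σ_{i : Fin d} ad*_{σᵢ(x)}(Wᵢ(x)) = 0. -/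
open MeasureTheory Matrix

attribute [local instance] Matrix.normedAddCommGroup Matrix.normedSpace

/-- Frobenius inner product `⟨A,B⟩ = trace(Aᵀ B)`. -/
def finner {n : ℕ} (A B : Matrix (Fin n) (Fin n) ℝ) : ℝ := (Aᵀ * B).trace

/-- Coadjoint operator relative to the Frobenius pairing:
`ad*_ξ(m) = ξᵀ m − m ξᵀ`, characterized by `⟨ad*_ξ m, ζ⟩ = ⟨m, ⁅ξ,ζ⁆⟩`. -/
def adStar {n : ℕ} (ξ m : Matrix (Fin n) (Fin n) ℝ) : Matrix (Fin n) (Fin n) ℝ :=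
  ξᵀ * m - m * ξᵀ

namespace CEPAux

variable {n : ℕ}

theorem finner_eq_sum (A B : Matrix (Fin n) (Fin n) ℝ) :
    finner A B = ∑ j, ∑ k, A k j * B k j := by
  simp [finner, Matrix.trace, Matrix.mul_apply, Matrix.diag, Matrix.transpose_apply]

theorem finner_zero_right (A : Matrix (Fin n) (Fin n) ℝ) : finner A 0 = 0 := by
  simp [finner]

theorem finner_zero_left (A : Matrix (Fin n) (Fin n) ℝ) : finner 0 A = 0 := by
  simp [finner]

theorem finner_sub_right (A B C : Matrix (Fin n) (Fin n) ℝ) :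
    finner A (B - C) = finner A B - finner A C := by
  simp [finner, Matrix.mul_sub]

theorem finner_add_left (A B C : Matrix (Fin n) (Fin n) ℝ) :
    finner (A + B) C = finner A C + finner B C := by
  simp [finner, Matrix.transpose_add, Matrix.add_mul]

theorem finner_smul_left (c : ℝ) (A B : Matrix (Fin n) (Fin n) ℝ) :
    finner (c • A) B = c * finner A B := by
  simp [finner, Matrix.transpose_smul, Matrix.smul_mul]

theorem finner_add_right (A B C : Matrix (Fin n) (Fin n) ℝ) :
    finner A (B + C) = finner A B + finner A C := by
  simp [finner, Matrix.mul_add]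

theorem finner_smul_right (c : ℝ) (A B : Matrix (Fin n) (Fin n) ℝ) :
    finner A (c • B) = c * finner A B := by
  simp [finner, Matrix.mul_smul]

theorem finner_sum_left {ι : Type*} (s : Finset ι) (f : ι → Matrix (Fin n) (Fin n) ℝ)
    (C : Matrix (Fin n) (Fin n) ℝ) :
    finner (∑ i ∈ s, f i) C = ∑ i ∈ s, finner (f i) C := by
  classical
  induction s using Finset.cons_induction with
  | empty => simp [finner]
  | cons a s ha ih => rw [Finset.sum_cons, Finset.sum_cons, finner_add_left, ih]

theorem finner_bracket (ξ m ζ : Matrix (Fin n) (Fin n) ℝ) :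
    finner m ⁅ξ, ζ⁆ = finner (adStar ξ m) ζ := by
  simp only [finner, adStar, Ring.lie_def, Matrix.transpose_sub, Matrix.transpose_mul,
    Matrix.transpose_transpose, Matrix.mul_sub, Matrix.sub_mul, Matrix.trace_sub,
    Matrix.mul_assoc]
  rw [Matrix.trace_mul_cycle' mᵀ ζ ξ]

theorem finner_stdBasis (A : Matrix (Fin n) (Fin n) ℝ) (a b : Fin n) :
    finner A (Matrix.single a b 1) = A a b := by
  simp [finner_eq_sum, Matrix.single, ite_and, Finset.sum_ite_eq, Finset.sum_ite_eq']

/-- `finner` as a bilinear map. -/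
noncomputable def finnerL :
    Matrix (Fin n) (Fin n) ℝ →ₗ[ℝ] Matrix (Fin n) (Fin n) ℝ →ₗ[ℝ] ℝ :=
  LinearMap.mk₂ ℝ finner
    (fun A B C => finner_add_left A B C)
    (fun c A B => finner_smul_left c A B)
    (fun A B C => finner_add_right A B C)
    (fun c A B => finner_smul_right c A B)

/-- `finner` as a continuous bilinear map. -/
noncomputable def finnerCLM :
    Matrix (Fin n) (Fin n) ℝ →L[ℝ] Matrix (Fin n) (Fin n) ℝ →L[ℝ] ℝ :=
  LinearMap.mkContinuous₂ finnerL ((n : ℝ) * n) (fun A B => by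
    have h : ∀ j k : Fin n, ‖A k j * B k j‖ ≤ ‖A‖ * ‖B‖ := fun j k => by
      rw [norm_mul]
      exact mul_le_mul (Matrix.norm_entry_le_entrywise_sup_norm A)
        (Matrix.norm_entry_le_entrywise_sup_norm B) (norm_nonneg _) (norm_nonneg _)
    have : ‖finnerL A B‖ ≤ ((n : ℝ) * n) * (‖A‖ * ‖B‖) := by
      show ‖finner A B‖ ≤ _
      rw [finner_eq_sum]
      calc ‖∑ j, ∑ k, A k j * B k j‖ ≤ ∑ j, ‖∑ k, A k j * B k j‖ := norm_sum_le _ _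
        _ ≤ ∑ j : Fin n, ∑ k : Fin n, ‖A k j * B k j‖ :=
            Finset.sum_le_sum fun j _ => norm_sum_le _ _
        _ ≤ ∑ _j : Fin n, ∑ _k : Fin n, ‖A‖ * ‖B‖ :=
            Finset.sum_le_sum fun j _ => Finset.sum_le_sum fun k _ => h j k
        _ = ((n : ℝ) * n) * (‖A‖ * ‖B‖) := by
            simp [Finset.sum_const, Finset.card_univ]; ring
    linarith [this, mul_assoc ((n : ℝ) * n) ‖A‖ ‖B‖])

theorem finnerCLM_apply (A B : Matrix (Fin n) (Fin n) ℝ) : finnerCLM A B = finner A B := rfl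

theorem continuous_finner :
    Continuous fun p : Matrix (Fin n) (Fin n) ℝ × Matrix (Fin n) (Fin n) ℝ =>
      finner p.1 p.2 :=
  finnerCLM.isBoundedBilinearMap.continuous

theorem hasFDerivAt_finner {E : Type*} [NormedAddCommGroup E] [NormedSpace ℝ E]
    {f g : E → Matrix (Fin n) (Fin n) ℝ} {x : E}
    {f' g' : E →L[ℝ] Matrix (Fin n) (Fin n) ℝ}
    (hf : HasFDerivAt f f' x) (hg : HasFDerivAt g g' x) :
    HasFDerivAt (fun y => finner (f y) (g y))
      ((finnerCLM (f x)).comp g' + (finnerCLM.flip (g x)).comp f') x := by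
  have h := (finnerCLM.isBoundedBilinearMap.hasFDerivAt (f x, g x)).comp x (hf.prodMk hg)
  convert h using 1 <;> rfl

theorem fderiv_finner_apply {E : Type*} [NormedAddCommGroup E] [NormedSpace ℝ E]
    {f g : E → Matrix (Fin n) (Fin n) ℝ} {x : E}
    {f' g' : E →L[ℝ] Matrix (Fin n) (Fin n) ℝ}
    (hf : HasFDerivAt f f' x) (hg : HasFDerivAt g g' x) (v : E) :
    fderiv ℝ (fun y => finner (f y) (g y)) x v
      = finner (f' v) (g x) + finner (f x) (g' v) := by
  rw [(hasFDerivAt_finner hf hg).fderiv]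
  simp [finnerCLM_apply, add_comm, ContinuousLinearMap.comp_apply, ContinuousLinearMap.flip_apply]
  exact (add_comm _ _ : finner (f x) (g' v) + finner (f' v) (g x) = _)

end CEPAux

open CEPAux

attribute [local irreducible] finner

set_option maxHeartbeats 2000000 in
/-- Equivalence between the covariant Euler–Poincaré variational principle with constrained
variations `δσ̄ = dη − [σ̄,η]` and the covariant Euler–Poincaré equations
`div(δℓ̄/δσ̄) = −Tr(ad*_σ̄ δℓ̄/δσ̄)` on a trivial principal bundle over `U`. -/
theorem covariant_euler_poincare_trivial
    {d n : ℕ} (hd : 1 ≤ d) (hn : 1 ≤ n)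
    (U : Set (EuclideanSpace ℝ (Fin d))) (hU : IsOpen U)
    (W σ : Fin d → EuclideanSpace ℝ (Fin d) → Matrix (Fin n) (Fin n) ℝ)
    (hW : ∀ i, ContDiffOn ℝ 1 (W i) U)
    (hσ : ∀ i, ContinuousOn (σ i) U) :
    (∀ η : EuclideanSpace ℝ (Fin d) → Matrix (Fin n) (Fin n) ℝ,
        ContDiff ℝ (⊤ : ℕ∞) η → HasCompactSupport η → tsupport η ⊆ U →
        ∫ x in U, ∑ i : Fin d,
          finner (W i x)
            (fderiv ℝ η x (EuclideanSpace.single i (1 : ℝ)) - ⁅σ i x, η x⁆) = 0)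
    ↔ (∀ x ∈ U,
        ∑ i : Fin d, fderiv ℝ (W i) x (EuclideanSpace.single i (1 : ℝ))
          + ∑ i : Fin d, adStar (σ i x) (W i x) = 0) := by
  classical
  set e : Fin d → EuclideanSpace ℝ (Fin d) := fun i => EuclideanSpace.single i (1 : ℝ) with he
  set F : EuclideanSpace ℝ (Fin d) → Matrix (Fin n) (Fin n) ℝ := fun x =>
    ∑ i : Fin d, fderiv ℝ (W i) x (e i) + ∑ i : Fin d, adStar (σ i x) (W i x) with hF
  -- differentiability of W on U
  have hWd : ∀ i, ∀ x ∈ U, HasFDerivAt (W i) (fderiv ℝ (W i) x) x := fun i x hx =>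
    (((hW i).differentiableOn one_ne_zero).differentiableAt (hU.mem_nhds hx)).hasFDerivAt
  -- continuity of components on U
  have cW : ∀ i, ContinuousOn (W i) U := fun i => (hW i).continuousOn
  have cW' : ∀ i, ContinuousOn (fun x => fderiv ℝ (W i) x (e i)) U := fun i =>
    ((hW i).continuousOn_fderiv_of_isOpen hU le_rfl).clm_apply continuousOn_const
  have cAd : ∀ i, ContinuousOn (fun x => adStar (σ i x) (W i x)) U := by
    intro i
    have hmul : Continuous fun p : Matrix (Fin n) (Fin n) ℝ × Matrix (Fin n) (Fin n) ℝ =>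
        p.1 * p.2 := Continuous.matrix_mul continuous_fst continuous_snd
    have h1 : ContinuousOn (fun x => (σ i x)ᵀ * W i x) U :=
      hmul.comp_continuousOn (((continuous_id.matrix_transpose).comp_continuousOn (hσ i)).prodMk (cW i))
    have h2 : ContinuousOn (fun x => W i x * (σ i x)ᵀ) U :=
      hmul.comp_continuousOn ((cW i).prodMk ((continuous_id.matrix_transpose).comp_continuousOn (hσ i)))
    exact h1.sub h2
  have cF : ContinuousOn F U := by
    apply ContinuousOn.add
    · exact continuousOn_finset_sum _ fun i _ => cW' i
    · exact continuousOn_finset_sum _ fun i _ => cAd i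
  -- the key integration-by-parts identity
  have key : ∀ η : EuclideanSpace ℝ (Fin d) → Matrix (Fin n) (Fin n) ℝ,
      ContDiff ℝ (⊤ : ℕ∞) η → HasCompactSupport η → tsupport η ⊆ U →
      (∫ x in U, ∑ i : Fin d,
          finner (W i x)
            (fderiv ℝ η x (EuclideanSpace.single i (1 : ℝ)) - ⁅σ i x, η x⁆))
        = - ∫ x in U, finner (F x) (η x) := by
    intro η hη hηc hηU
    have hηd : Differentiable ℝ η := hη.differentiable (by simp)
    have hη' : Continuous fun x => fderiv ℝ η x := hη.continuous_fderiv (by simp)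
    -- vanishing outside tsupport η
    have hout : ∀ x, x ∉ tsupport η → η x = 0 ∧ fderiv ℝ η x = 0 := fun x hx =>
      ⟨image_eq_zero_of_notMem_tsupport hx, (HasFDerivAt.of_notMem_tsupport ℝ hx).fderiv⟩
    set A : Fin d → EuclideanSpace ℝ (Fin d) → ℝ := fun i x =>
      finner (fderiv ℝ (W i) x (e i)) (η x) with hA
    set B : Fin d → EuclideanSpace ℝ (Fin d) → ℝ := fun i x =>
      finner (W i x) (fderiv ℝ η x (e i)) with hB
    set C : Fin d → EuclideanSpace ℝ (Fin d) → ℝ := fun i x =>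
      finner (adStar (σ i x) (W i x)) (η x) with hC
    -- integrability helper
    have glue : ∀ p : EuclideanSpace ℝ (Fin d) → ℝ, ContinuousOn p U →
        (∀ x, x ∉ tsupport η → p x = 0) → Integrable p := by
      intro p hpU hp0
      have hcont : Continuous p := by
        rw [continuous_iff_continuousAt]
        intro x
        by_cases hx : x ∈ U
        · exact hpU.continuousAt (hU.mem_nhds hx)
        · have hx' : x ∉ tsupport η := fun h => hx (hηU h)
          have hev : p =ᶠ[nhds x] (fun _ => (0 : ℝ)) := by
            have hm : (tsupport η)ᶜ ∈ nhds x :=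
              (isClosed_tsupport η).isOpen_compl.mem_nhds hx'
            filter_upwards [hm] with y hy using hp0 y hy
          exact ContinuousAt.congr continuousAt_const hev.symm
      have hsupp : HasCompactSupport p := HasCompactSupport.intro hηc hp0
      exact hcont.integrable_of_hasCompactSupport hsupp
    have iA : ∀ i, Integrable (A i) := fun i =>
      glue (A i) (continuous_finner.comp_continuousOn ((cW' i).prodMk hηd.continuous.continuousOn))
        (fun x hx => by simp [hA, (hout x hx).1, finner_zero_right])
    have iB : ∀ i, Integrable (B i) := fun i =>
      glue (B i) (continuous_finner.comp_continuousOn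
          ((cW i).prodMk ((hη'.clm_apply continuous_const).continuousOn)))
        (fun x hx => by simp [hB, (hout x hx).2, finner_zero_right])
    have iC : ∀ i, Integrable (C i) := fun i =>
      glue (C i) (continuous_finner.comp_continuousOn ((cAd i).prodMk hηd.continuous.continuousOn))
        (fun x hx => by simp [hC, (hout x hx).1, finner_zero_right])
    -- integration by parts in each direction
    have hIBP : ∀ i, ∫ x, B i x = - ∫ x, A i x := by
      intro i
      set g1 : EuclideanSpace ℝ (Fin d) → ℝ := fun x => finner (W i x) (η x) with hg1
      have hder : ∀ x, DifferentiableAt ℝ g1 x ∧ fderiv ℝ g1 x (e i) = A i x + B i x := by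
        intro x
        by_cases hx : x ∈ U
        · have h := hasFDerivAt_finner (hWd i x hx) (hηd x).hasFDerivAt
          refine ⟨h.differentiableAt, ?_⟩
          rw [fderiv_finner_apply (hWd i x hx) (hηd x).hasFDerivAt]
        · have hx' : x ∉ tsupport η := fun h => hx (hηU h)
          have hev : g1 =ᶠ[nhds x] (fun _ => (0 : ℝ)) := by
            have hm : (tsupport η)ᶜ ∈ nhds x :=
              (isClosed_tsupport η).isOpen_compl.mem_nhds hx'
            filter_upwards [hm] with y hy
            simp [hg1, image_eq_zero_of_notMem_tsupport hy, finner_zero_right]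
          have h0 : HasFDerivAt g1 (0 : EuclideanSpace ℝ (Fin d) →L[ℝ] ℝ) x :=
            (hasFDerivAt_const (0 : ℝ) x).congr_of_eventuallyEq hev
          refine ⟨h0.differentiableAt, ?_⟩
          rw [h0.fderiv]
          simp [hA, hB, (hout x hx').1, (hout x hx').2, finner_zero_right]
      have hint : Integrable (fun x => fderiv ℝ g1 x (e i)) := by
        have : (fun x => fderiv ℝ g1 x (e i)) = fun x => A i x + B i x :=
          funext fun x => (hder x).2
        rw [this]
        exact (iA i).add (iB i)
      have ig1 : Integrable g1 :=
        glue g1 (continuous_finner.comp_continuousOn ((cW i).prodMk hηd.continuous.continuousOn))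
          (fun x hx => by simp [hg1, (hout x hx).1, finner_zero_right])
      have h0 : (0 : ℝ) = - ∫ x, fderiv ℝ g1 x (e i) := by
        have hibp := integral_mul_fderiv_eq_neg_fderiv_mul_of_integrable
          (f := g1) (g := fun _ => (1 : ℝ)) (v := e i) (μ := volume)
          (by simpa using hint) (by simp) (by simpa using ig1)
          (fun x _ => (hder x).1) (fun x _ => differentiableAt_const (1 : ℝ))
        simpa using hibp.symm
      have h1 : ∫ x, (A i x + B i x) = 0 := by
        have : (fun x => fderiv ℝ g1 x (e i)) = fun x => A i x + B i x :=
          funext fun x => (hder x).2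
        rw [← this]
        linarith [h0]
      rw [integral_add (iA i) (iB i)] at h1
      linarith
    -- move set integrals to the whole space
    have hL : (∫ x in U, ∑ i : Fin d,
          finner (W i x)
            (fderiv ℝ η x (EuclideanSpace.single i (1 : ℝ)) - ⁅σ i x, η x⁆))
        = ∫ x, ∑ i : Fin d, (B i x - C i x) := by
      have hpt : ∀ x, (∑ i : Fin d,
          finner (W i x)
            (fderiv ℝ η x (EuclideanSpace.single i (1 : ℝ)) - ⁅σ i x, η x⁆))
          = ∑ i : Fin d, (B i x - C i x) := by
        intro x
        refine Finset.sum_congr rfl fun i _ => ?_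
        rw [finner_sub_right, finner_bracket]
      rw [show (fun x => ∑ i : Fin d,
          finner (W i x)
            (fderiv ℝ η x (EuclideanSpace.single i (1 : ℝ)) - ⁅σ i x, η x⁆))
          = fun x => ∑ i : Fin d, (B i x - C i x) from funext hpt]
      apply setIntegral_eq_integral_of_forall_compl_eq_zero
      intro x hx
      have hx' : x ∉ tsupport η := fun h => hx (hηU h)
      refine Finset.sum_eq_zero fun i _ => ?_
      simp [hB, hC, (hout x hx').1, (hout x hx').2, finner_zero_right]
    have hR : (∫ x in U, finner (F x) (η x))
        = ∫ x, (∑ i : Fin d, A i x + ∑ i : Fin d, C i x) := by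
      have hpt : ∀ x, finner (F x) (η x) = ∑ i : Fin d, A i x + ∑ i : Fin d, C i x := by
        intro x
        rw [hF]
        rw [finner_add_left, finner_sum_left, finner_sum_left]
      rw [show (fun x => finner (F x) (η x))
          = fun x => ∑ i : Fin d, A i x + ∑ i : Fin d, C i x from funext hpt]
      apply setIntegral_eq_integral_of_forall_compl_eq_zero
      intro x hx
      have hx' : x ∉ tsupport η := fun h => hx (hηU h)
      have h1 : ∀ i : Fin d, A i x = 0 := fun i => by
        simp [hA, (hout x hx').1, finner_zero_right]
      have h2 : ∀ i : Fin d, C i x = 0 := fun i => by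
        simp [hC, (hout x hx').1, finner_zero_right]
      simp [h1, h2]
    rw [hL, hR]
    have hInt1 : ∫ x, ∑ i : Fin d, (B i x - C i x)
        = ∑ i : Fin d, ((∫ x, B i x) - ∫ x, C i x) := by
      have h := integral_finset_sum (μ := volume) Finset.univ
        (f := fun (i : Fin d) x => B i x - C i x) (fun i _ => (iB i).sub (iC i))
      exact h.trans (Finset.sum_congr rfl fun i _ => integral_sub (iB i) (iC i))
    have hInt2 : ∫ x, (∑ i : Fin d, A i x + ∑ i : Fin d, C i x)
        = ∑ i : Fin d, (∫ x, A i x) + ∑ i : Fin d, (∫ x, C i x) := by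
      have h1 := integral_add (μ := volume)
        (f := fun x => ∑ i : Fin d, A i x) (g := fun x => ∑ i : Fin d, C i x)
        (integrable_finset_sum _ fun i _ => iA i) (integrable_finset_sum _ fun i _ => iC i)
      have h2 := integral_finset_sum (μ := volume) Finset.univ
        (f := fun (i : Fin d) x => A i x) (fun i _ => iA i)
      have h3 := integral_finset_sum (μ := volume) Finset.univ
        (f := fun (i : Fin d) x => C i x) (fun i _ => iC i)
      rw [h1, h2, h3]
    rw [hInt1, hInt2]
    have : ∀ i : Fin d, (∫ x, B i x) - ∫ x, C i x = -((∫ x, A i x) + ∫ x, C i x) := by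
      intro i
      rw [hIBP i]
      ring
    rw [Finset.sum_congr rfl fun i _ => this i, Finset.sum_neg_distrib,
      Finset.sum_add_distrib]
  -- now the equivalence
  constructor
  · -- variational principle implies the PDE
    intro hvar x₀ hx₀
    have hFint : ∀ η : EuclideanSpace ℝ (Fin d) → Matrix (Fin n) (Fin n) ℝ,
        ContDiff ℝ (⊤ : ℕ∞) η → HasCompactSupport η → tsupport η ⊆ U →
        (∫ x in U, finner (F x) (η x)) = 0 := by
      intro η h1 h2 h3
      have h4 := hvar η h1 h2 h3
      rw [key η h1 h2 h3] at h4
      linarith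
    suffices hsf : ∀ a b : Fin n, F x₀ a b = 0 by
      have : F x₀ = 0 := by
        ext a b
        exact hsf a b
      simpa [hF] using this
    intro a b
    set f : EuclideanSpace ℝ (Fin d) → ℝ := fun x => F x a b with hf
    have cf : ContinuousOn f U := by
      have : Continuous fun M : Matrix (Fin n) (Fin n) ℝ => M a b :=
        (continuous_apply b).comp (continuous_apply a)
      exact this.comp_continuousOn cF
    have hloc : LocallyIntegrableOn f U volume :=
      cf.locallyIntegrableOn hU.measurableSet
    have hae : ∀ᵐ x ∂(volume : Measure (EuclideanSpace ℝ (Fin d))), x ∈ U → f x = 0 := by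
      apply hU.ae_eq_zero_of_integral_contDiff_smul_eq_zero hloc
      intro g hg hgc hgU
      set η : EuclideanSpace ℝ (Fin d) → Matrix (Fin n) (Fin n) ℝ :=
        fun x => g x • Matrix.single a b (1 : ℝ) with hηdef
      have hη : ContDiff ℝ (⊤ : ℕ∞) η := hg.smul contDiff_const
      have hηc : HasCompactSupport η := hgc.smul_right
      have hηU : tsupport η ⊆ U := by
        refine subset_trans ?_ hgU
        exact closure_mono (Function.support_smul_subset_left g _)
      have h5 := hFint η hη hηc hηU
      have h6 : (∫ x in U, finner (F x) (η x)) = ∫ x in U, g x • f x := by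
        refine setIntegral_congr_fun hU.measurableSet fun x _ => ?_
        show finner (F x) (g x • Matrix.single a b (1 : ℝ)) = g x • f x
        rw [finner_smul_right, finner_stdBasis]
        simp [hf]
      have h7 : (∫ x in U, g x • f x) = ∫ x, g x • f x := by
        apply setIntegral_eq_integral_of_forall_compl_eq_zero
        intro x hx
        have : g x = 0 := image_eq_zero_of_notMem_tsupport fun h => hx (hgU h)
        simp [this]
      rw [← h7, ← h6, h5]
    by_contra hne
    have hc : ContinuousAt f x₀ := cf.continuousAt (hU.mem_nhds hx₀)
    have hev : ∀ᶠ y in nhds x₀, f y ≠ 0 := hc.eventually_ne hne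
    have hev2 : ∀ᶠ y in nhds x₀, y ∈ U := hU.eventually_mem hx₀
    have ht : {y | f y ≠ 0 ∧ y ∈ U} ∈ nhds x₀ := by
      filter_upwards [hev, hev2] with y h1 h2 using ⟨h1, h2⟩
    have hpos : 0 < (volume : Measure (EuclideanSpace ℝ (Fin d))) {y | f y ≠ 0 ∧ y ∈ U} :=
      Measure.measure_pos_of_mem_nhds (μ := volume) ht
    have hzero : (volume : Measure (EuclideanSpace ℝ (Fin d))) {y | f y ≠ 0 ∧ y ∈ U} = 0 := by
      refine measure_mono_null ?_ (ae_iff.1 hae)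
      intro y hy
      simp only [Set.mem_setOf_eq] at hy ⊢
      exact fun h => hy.1 (h hy.2)
    exact hpos.ne' hzero
  · -- the PDE implies the variational principle
    intro hpde η h1 h2 h3
    rw [key η h1 h2 h3]
    have : (∫ x in U, finner (F x) (η x)) = 0 := by
      apply setIntegral_eq_zero_of_forall_eq_zero
      intro x hx
      have hz : F x = 0 := by
        have := hpde x hx
        simpa [hF] using this
      rw [hz, finner_zero_left]
    rw [this, neg_zero]
end

section
/- Let k, n ≥ 1 and let Ω be an open subset of ℝ × EuclideanSpace ℝ (Fin k), equipped with the (product) Lebesgue measure. Let a : ℝ × EuclideanSpace ℝ (Fin k) → Matrix (Fin n) (Fin n) ℝ and, for each i : Fin k, bᵢ : ℝ × EuclideanSpace ℝ (Fin k) → Matrix (Fin n) (Fin n) ℝ be continuously differentiable on Ω, and let ν, γᵢ (i : Fin k) be continuous on Ω with matrix values. Then the following are equivalent: (a) for every smooth ζ : ℝ × EuclideanSpace ℝ (Fin k) → Matrix (Fin n) (Fin n) ℝ whose support is compact and contained in Ω, ∫_Ω ( ⟨a(t,x), ∂_tζ(t,x) − ⁅ν(t,x), ζ(t,x)⁆⟩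 − Σ_{i : Fin k} ⟨bᵢ(t,x), ∂ᵢζ(t,x) + ⁅γᵢ(t,x), ζ(t,x)⁆⟩ ) d(t,x) = 0, where ∂ᵢζ is the partial derivative in the direction of the i-th standard basis vector of the spatial factor; (b) for every (t,x) ∈ Ω, ∂_t a(t,x) = − ad*_{ν(t,x)}(a(t,x)) + Σ_{i : Fin k} ∂ᵢbᵢ(t,x) − Σ_{i : Fin k} ad*_{γᵢ(t,x)}(bᵢ(t,x)). -/
open MeasureTheory Matrix

attribute [local instance] Matrix.normedAddCommGroup Matrix.normedSpace

open scoped ContDiff Manifold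
open Set

namespace EPaux

variable {n : ℕ}
local notation "M" => Matrix (Fin n) (Fin n) ℝ

noncomputable def finnerL : Matrix (Fin n) (Fin n) ℝ →L[ℝ] Matrix (Fin n) (Fin n) ℝ →L[ℝ] ℝ :=
  LinearMap.toContinuousLinearMap
  { toFun := fun A => LinearMap.toContinuousLinearMap
      { toFun := fun B => finner A B
        map_add' := by intro x y; simp [finner, Matrix.mul_add]
        map_smul' := by intro c x; simp [finner, Matrix.mul_smul] }
    map_add' := by
      intro x y; ext B; simp [finner, Matrix.transpose_add, Matrix.add_mul]
    map_smul' := by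
      intro c x; ext B; simp [finner, Matrix.transpose_smul, Matrix.smul_mul] }

@[simp] lemma finner_zero_right (A : M) : finner A 0 = 0 := by simp [finner]

@[simp] lemma finnerL_apply (A B : M) : finnerL A B = finner A B := rfl

lemma finner_bracket (m ξ ζ : M) : finner m ⁅ξ, ζ⁆ = finner (adStar ξ m) ζ := by
  simp only [finner, adStar, Ring.lie_def, Matrix.mul_sub, Matrix.sub_mul, Matrix.trace_sub,
    Matrix.transpose_sub, Matrix.transpose_mul, Matrix.transpose_transpose]
  rw [← Matrix.mul_assoc, ← Matrix.mul_assoc, Matrix.trace_mul_cycle mᵀ ζ ξ]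

lemma finner_stdBasisMatrix (A : M) (i j : Fin n) :
    finner A (Matrix.single i j 1) = A i j := by
  classical
  simp only [finner, Matrix.trace, Matrix.diag, Matrix.mul_apply, Matrix.single,
    Matrix.transpose_apply, Matrix.of_apply, mul_ite, mul_one, mul_zero]
  simp [ite_and, Finset.sum_ite_eq]

lemma finner_smul_right (A B : M) (c : ℝ) : finner A (c • B) = c * finner A B := by
  simp [finner, Matrix.mul_smul]

end EPaux

lemma exists_cutoff {E : Type*} [NormedAddCommGroup E] [NormedSpace ℝ E] [FiniteDimensional ℝ E]
    {K Ω : Set E} (hK : IsCompact K) (hΩ : IsOpen Ω) (hKΩ : K ⊆ Ω) :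
    ∃ χ : E → ℝ, ContDiff ℝ (⊤ : ℕ∞) χ ∧ HasCompactSupport χ ∧ tsupport χ ⊆ Ω ∧
      ∃ U, IsOpen U ∧ K ⊆ U ∧ ∀ x ∈ U, χ x = 1 := by
  obtain ⟨L, hL, hKL, hLΩ⟩ := exists_compact_between hK hΩ hKΩ
  obtain ⟨f, hf1, hf0, -⟩ := exists_contMDiffMap_one_nhds_of_subset_interior 𝓘(ℝ, E)
    (M := E) (n := (⊤ : ℕ∞)) hK.isClosed hKL
  obtain ⟨U, hUo, hKU, hU1⟩ := eventually_nhdsSet_iff_exists.mp hf1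
  refine ⟨f, ?_, ?_, ?_, U, hUo, hKU, hU1⟩
  · exact contMDiff_iff_contDiff.mp f.contMDiff
  · exact HasCompactSupport.of_support_subset_isCompact hL
      (fun x hx => by by_contra h; exact hx (hf0 x h))
  · exact (closure_minimal (fun x hx => by by_contra h; exact hx (hf0 x h)) hL.isClosed).trans hLΩ

section Helpers

variable {E : Type*} [NormedAddCommGroup E] [NormedSpace ℝ E]
  {F : Type*} [NormedAddCommGroup F] [NormedSpace ℝ F]

lemma contDiff_cutoff_smul {f : E → F} {χ : E → ℝ} {Ω : Set E} (hΩ : IsOpen Ω)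
    (hf : ContDiffOn ℝ 1 f Ω) (hχ : ContDiff ℝ (⊤ : ℕ∞) χ) (hsupp : tsupport χ ⊆ Ω) :
    ContDiff ℝ 1 fun p => χ p • f p := by
  rw [contDiff_iff_contDiffAt]
  intro p
  by_cases hp : p ∈ Ω
  · exact ((hχ.of_le (by exact_mod_cast le_top)).contDiffAt).smul
      (hf.contDiffAt (hΩ.mem_nhds hp))
  · have hχ0 : χ =ᶠ[nhds p] 0 := notMem_tsupport_iff_eventuallyEq.mp (fun h => hp (hsupp h))
    exact contDiffAt_const (c := 0) |>.congr_of_eventuallyEq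
      (by filter_upwards [hχ0] with x hx; simp [hx])

lemma continuous_cutoff_smul {f : E → F} {χ : E → ℝ} {Ω : Set E} (hΩ : IsOpen Ω)
    (hf : ContinuousOn f Ω) (hχ : Continuous χ) (hsupp : tsupport χ ⊆ Ω) :
    Continuous fun p => χ p • f p := by
  rw [continuous_iff_continuousAt]
  intro p
  by_cases hp : p ∈ Ω
  · exact (hχ.continuousAt).smul ((hf.continuousAt (hΩ.mem_nhds hp)))
  · have hχ0 : χ =ᶠ[nhds p] 0 := notMem_tsupport_iff_eventuallyEq.mp (fun h => hp (hsupp h))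
    have heq : (fun x => χ x • f x) =ᶠ[nhds p] fun _ => (0 : F) := by
      filter_upwards [hχ0] with x hx
      simp only [Pi.zero_apply] at hx
      simp [hx]
    exact ContinuousAt.congr continuousAt_const heq.symm

omit [NormedSpace ℝ E] in
lemma cutoff_smul_eventuallyEq {f : E → F} {χ : E → ℝ} {U : Set E} (hU : IsOpen U)
    (hχ1 : ∀ x ∈ U, χ x = 1) {p : E} (hp : p ∈ U) :
    (fun p => χ p • f p) =ᶠ[nhds p] f := by
  filter_upwards [hU.mem_nhds hp] with x hx
  simp [hχ1 x hx]

lemma fderiv_cutoff_smul_eq {f : E → F} {χ : E → ℝ} {U : Set E} (hU : IsOpen U)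
    (hχ1 : ∀ x ∈ U, χ x = 1) {p : E} (hp : p ∈ U) :
    fderiv ℝ (fun p => χ p • f p) p = fderiv ℝ f p :=
  (cutoff_smul_eventuallyEq hU hχ1 hp).fderiv_eq

lemma eqOn_zero_of_ae {X : Type*} [TopologicalSpace X] [MeasurableSpace X]
    {μ : Measure X} [μ.IsOpenPosMeasure] {Y : Type*} [NormedAddCommGroup Y]
    {f : X → Y} {Ω : Set X} (hΩ : IsOpen Ω) (hf : ContinuousOn f Ω)
    (h : ∀ᵐ x ∂μ, x ∈ Ω → f x = 0) : ∀ p ∈ Ω, f p = 0 := by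
  intro p hp
  by_contra hfp
  have hV : IsOpen (Ω ∩ f ⁻¹' {0}ᶜ) := hf.isOpen_inter_preimage hΩ isOpen_compl_singleton
  have hsub : (Ω ∩ f ⁻¹' {0}ᶜ) ⊆ {x | ¬(x ∈ Ω → f x = 0)} := by
    rintro x ⟨hx1, hx2⟩ hx3
    exact hx2 (hx3 hx1)
  have h0 : μ (Ω ∩ f ⁻¹' {0}ᶜ) = 0 :=
    measure_mono_null hsub (by simpa [ae_iff] using h)
  exact absurd h0 (hV.measure_ne_zero μ ⟨p, hp, hfp⟩)

end Helpers

section IBP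

variable {k n : ℕ}

local notation "X" => (ℝ × EuclideanSpace ℝ (Fin k))
local notation "Mat" => Matrix (Fin n) (Fin n) ℝ

instance volume_isAddHaar : (volume : Measure (ℝ × EuclideanSpace ℝ (Fin k))).IsAddHaarMeasure :=
  inferInstanceAs (((volume : Measure ℝ).prod
    (volume : Measure (EuclideanSpace ℝ (Fin k)))).IsAddHaarMeasure)

open EPaux

lemma integrable_of_support_subset {g : X → ℝ} {ζ : X → Mat}
    (hζc : HasCompactSupport ζ) (hg : Continuous g)
    (hsupp : Function.support g ⊆ tsupport ζ) : Integrable g volume :=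
  hg.integrable_of_hasCompactSupport
    (HasCompactSupport.of_support_subset_isCompact hζc hsupp)

lemma ibp (f ζ : X → Mat) (v : X) (hf : ContDiff ℝ 1 f)
    (hζs : ContDiff ℝ (⊤ : ℕ∞) ζ) (hζc : HasCompactSupport ζ) :
    ∫ p, finner (f p) (fderiv ℝ ζ p v) = - ∫ p, finner (fderiv ℝ f p v) (ζ p) := by
  have hζ1 : ContDiff ℝ 1 ζ := hζs.of_le (by exact_mod_cast le_top)
  have hcf : Continuous f := hf.continuous
  have hcζ : Continuous ζ := hζ1.continuous
  have hcdf : Continuous fun x => fderiv ℝ f x v :=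
    (hf.continuous_fderiv one_ne_zero).clm_apply continuous_const
  have hcdζ : Continuous fun x => fderiv ℝ ζ x v :=
    (hζ1.continuous_fderiv one_ne_zero).clm_apply continuous_const
  have h1 : Integrable (fun x => finnerL (fderiv ℝ f x v) (ζ x)) volume := by
    refine integrable_of_support_subset hζc
      ((finnerL.continuous.comp hcdf).clm_apply hcζ) ?_
    intro x hx
    have : ζ x ≠ 0 := fun h => hx (by simp [h])
    exact subset_tsupport ζ this
  have h2 : Integrable (fun x => finnerL (f x) (fderiv ℝ ζ x v)) volume := by
    refine integrable_of_support_subset hζc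
      ((finnerL.continuous.comp hcf).clm_apply hcdζ) ?_
    intro x hx
    have : fderiv ℝ ζ x ≠ 0 := by
      intro h
      exact hx (by simp [h])
    exact support_fderiv_subset ℝ this
  have h3 : Integrable (fun x => finnerL (f x) (ζ x)) volume := by
    refine integrable_of_support_subset hζc
      ((finnerL.continuous.comp hcf).clm_apply hcζ) ?_
    intro x hx
    have : ζ x ≠ 0 := fun h => hx (by simp [h])
    exact subset_tsupport ζ this
  have := integral_bilinear_fderiv_right_eq_neg_left_of_integrable (μ := volume)
    (B := finnerL) h1 h2 h3 (fun x _ => hf.differentiable one_ne_zero x)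
    (fun x _ => hζ1.differentiable one_ne_zero x)
  exact this

end IBP

section Core

variable {k n : ℕ}

local notation "X" => (ℝ × EuclideanSpace ℝ (Fin k))
local notation "Mat" => Matrix (Fin n) (Fin n) ℝ

open EPaux

-- more finner algebra
namespace EPaux
variable {n : ℕ}
lemma finner_add_right (A B C : Matrix (Fin n) (Fin n) ℝ) :
    finner A (B + C) = finner A B + finner A C := by simp [finner, Matrix.mul_add]
lemma finner_sub_right (A B C : Matrix (Fin n) (Fin n) ℝ) :
    finner A (B - C) = finner A B - finner A C := by simp [finner, Matrix.mul_sub]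
lemma finner_sub_left (A B C : Matrix (Fin n) (Fin n) ℝ) :
    finner (A - B) C = finner A C - finner B C := by
  simp [finner, Matrix.transpose_sub, Matrix.sub_mul]
lemma finner_smul_left (c : ℝ) (A B : Matrix (Fin n) (Fin n) ℝ) :
    finner (c • A) B = c * finner A B := by
  simp [finner, Matrix.transpose_smul, Matrix.smul_mul]
lemma finner_sum_left {ι : Type*} (s : Finset ι) (f : ι → Matrix (Fin n) (Fin n) ℝ)
    (B : Matrix (Fin n) (Fin n) ℝ) :
    finner (∑ i ∈ s, f i) B = ∑ i ∈ s, finner (f i) B := by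
  simp [finner, Matrix.transpose_sum, Matrix.sum_mul, Matrix.trace_sum]
end EPaux

lemma continuous_adStar_pair {α : Type*} [TopologicalSpace α] {f g : α → Mat}
    (hf : Continuous f) (hg : Continuous g) :
    Continuous fun p => adStar (f p) (g p) := by
  simp only [adStar]
  exact (hf.matrix_transpose.matrix_mul hg).sub (hg.matrix_mul hf.matrix_transpose)

lemma continuousOn_adStar_pair {s : Set X} {f g : X → Mat} (hf : ContinuousOn f s)
    (hg : ContinuousOn g s) : ContinuousOn (fun p => adStar (f p) (g p)) s := by
  rw [continuousOn_iff_continuous_restrict] at *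
  exact continuous_adStar_pair hf hg

/-- The single-term integral identity: for `f` C¹ and `g` continuous (both globally),
`ζ` smooth compactly supported,
`∫ finner (f p) (Dζ p v + s • ⁅g p, ζ p⁆) = ∫ finner (s • adStar (g p) (f p) - Df p v) (ζ p)`. -/
lemma piece (f g ζ : X → Mat) (v : X) (s : ℝ) (hf : ContDiff ℝ 1 f) (hg : Continuous g)
    (hζs : ContDiff ℝ (⊤ : ℕ∞) ζ) (hζc : HasCompactSupport ζ) :
    ∫ p, finner (f p) (fderiv ℝ ζ p v + s • ⁅g p, ζ p⁆)
      = ∫ p, finner (s • adStar (g p) (f p) - fderiv ℝ f p v) (ζ p) := by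
  have hζ1 : ContDiff ℝ 1 ζ := hζs.of_le (by exact_mod_cast le_top)
  have hcζ : Continuous ζ := hζ1.continuous
  have hcdζ : Continuous fun x => fderiv ℝ ζ x v :=
    (hζ1.continuous_fderiv one_ne_zero).clm_apply continuous_const
  -- integrability of the two LHS pieces and the RHS pieces
  have hI1 : Integrable (fun p => finner (f p) (fderiv ℝ ζ p v)) volume := by
    refine integrable_of_support_subset hζc
      (by exact ((finnerL.continuous.comp hf.continuous).clm_apply hcdζ)) ?_
    intro x hx
    by_contra h
    have : fderiv ℝ ζ x = 0 := by
      by_contra hne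
      exact h (support_fderiv_subset ℝ hne)
    exact hx (by simp [this])
  have hI2 : Integrable (fun p => finner (adStar (g p) (f p)) (ζ p)) volume := by
    refine integrable_of_support_subset hζc
      (by exact ((finnerL.continuous.comp (continuous_adStar_pair hg hf.continuous)).clm_apply
        hcζ)) ?_
    intro x hx
    exact subset_tsupport ζ (fun h => hx (by simp [h]))
  have hI3 : Integrable (fun p => finner (fderiv ℝ f p v) (ζ p)) volume := by
    refine integrable_of_support_subset hζc
      (by exact ((finnerL.continuous.comp
        ((hf.continuous_fderiv one_ne_zero).clm_apply continuous_const)).clm_apply hcζ)) ?_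
    intro x hx
    exact subset_tsupport ζ (fun h => hx (by simp [h]))
  calc ∫ p, finner (f p) (fderiv ℝ ζ p v + s • ⁅g p, ζ p⁆)
      = ∫ p, (finner (f p) (fderiv ℝ ζ p v) + s * finner (adStar (g p) (f p)) (ζ p)) := by
        simp only [finner_add_right, finner_smul_right, finner_bracket]
    _ = (∫ p, finner (f p) (fderiv ℝ ζ p v)) + s * ∫ p, finner (adStar (g p) (f p)) (ζ p) := by
        rw [integral_add hI1 (hI2.const_mul s), integral_const_mul]
    _ = -(∫ p, finner (fderiv ℝ f p v) (ζ p)) + s * ∫ p, finner (adStar (g p) (f p)) (ζ p) := by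
        rw [ibp f ζ v hf hζs hζc]
    _ = ∫ p, finner (s • adStar (g p) (f p) - fderiv ℝ f p v) (ζ p) := by
        simp only [finner_sub_left, finner_smul_left]
        rw [integral_sub (hI2.const_mul s) hI3, integral_const_mul]
        ring

end Core

section Star

variable {k n : ℕ}

local notation "X" => (ℝ × EuclideanSpace ℝ (Fin k))
local notation "Mat" => Matrix (Fin n) (Fin n) ℝ

open EPaux

lemma continuous_bracket {α : Type*} [TopologicalSpace α] {f g : α → Mat}
    (hf : Continuous f) (hg : Continuous g) : Continuous fun p => ⁅f p, g p⁆ := by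
  simp only [Ring.lie_def]
  exact (hf.matrix_mul hg).sub (hg.matrix_mul hf)

lemma integrable_finner_left {h ζ : X → Mat} (hh : Continuous h) (hζ1 : Continuous ζ)
    (hζc : HasCompactSupport ζ) : Integrable (fun p => finner (h p) (ζ p)) volume :=
  integrable_of_support_subset hζc
    (by exact (finnerL.continuous.comp hh).clm_apply hζ1)
    (fun x hx => subset_tsupport ζ (fun h0 => hx (by simp [h0])))

lemma integrable_piece {f g ζ : X → Mat} (v : X) (s : ℝ) (hf : Continuous f)
    (hg : Continuous g) (hζ1 : ContDiff ℝ 1 ζ) (hζc : HasCompactSupport ζ) :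
    Integrable (fun p => finner (f p) (fderiv ℝ ζ p v + s • ⁅g p, ζ p⁆)) volume := by
  have hcζ := hζ1.continuous
  have hcont : Continuous fun p => finner (f p) (fderiv ℝ ζ p v + s • ⁅g p, ζ p⁆) := by
    exact (finnerL.continuous.comp hf).clm_apply
      (((hζ1.continuous_fderiv one_ne_zero).clm_apply continuous_const).add
        ((continuous_bracket hg hcζ).const_smul s))
  refine integrable_of_support_subset hζc hcont ?_
  intro x hx
  by_contra hxt
  have hd : fderiv ℝ ζ x = 0 := by
    by_contra hne
    exact hxt (support_fderiv_subset ℝ hne)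
  have hz : ζ x = 0 := image_eq_zero_of_notMem_tsupport hxt
  exact hx (by simp [hd, hz, Ring.lie_def])

lemma star_lemma {Ω : Set X} (hΩ : IsOpen Ω)
    (a : X → Mat) (b : Fin k → X → Mat) (ν : X → Mat) (γ : Fin k → X → Mat)
    (ha : ContDiffOn ℝ 1 a Ω) (hb : ∀ i, ContDiffOn ℝ 1 (b i) Ω)
    (hν : ContinuousOn ν Ω) (hγ : ∀ i, ContinuousOn (γ i) Ω)
    (ζ : X → Mat) (hζs : ContDiff ℝ (⊤ : ℕ∞) ζ) (hζc : HasCompactSupport ζ)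
    (hζΩ : tsupport ζ ⊆ Ω) :
    ∫ p in Ω,
      (finner (a p) (fderiv ℝ ζ p ((1 : ℝ), (0 : EuclideanSpace ℝ (Fin k))) - ⁅ν p, ζ p⁆)
        - ∑ i : Fin k, finner (b i p)
            (fderiv ℝ ζ p ((0 : ℝ), EuclideanSpace.single i (1 : ℝ)) + ⁅γ i p, ζ p⁆))
    = ∫ p in Ω, finner
        ((-adStar (ν p) (a p) - fderiv ℝ a p ((1 : ℝ), (0 : EuclideanSpace ℝ (Fin k))))
          - ∑ i : Fin k, (adStar (γ i p) (b i p)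
              - fderiv ℝ (b i) p ((0 : ℝ), EuclideanSpace.single i (1 : ℝ)))) (ζ p) := by
  classical
  set v0 : X := ((1 : ℝ), (0 : EuclideanSpace ℝ (Fin k))) with hv0
  set e : Fin k → X := fun i => ((0 : ℝ), EuclideanSpace.single i (1 : ℝ)) with he
  obtain ⟨χ, hχs, hχc, hχΩ, U, hUo, hKU, hU1⟩ := exists_cutoff hζc hΩ hζΩ
  have hζ1 : ContDiff ℝ 1 ζ := hζs.of_le (by exact_mod_cast le_top)
  have hcζ : Continuous ζ := hζ1.continuous
  have hA : ContDiff ℝ 1 (fun p => χ p • a p) := contDiff_cutoff_smul hΩ ha hχs hχΩ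
  have hB : ∀ i, ContDiff ℝ 1 (fun p => χ p • b i p) :=
    fun i => contDiff_cutoff_smul hΩ (hb i) hχs hχΩ
  have hN : Continuous (fun p => χ p • ν p) :=
    continuous_cutoff_smul hΩ hν hχs.continuous hχΩ
  have hΓ : ∀ i, Continuous (fun p => χ p • γ i p) :=
    fun i => continuous_cutoff_smul hΩ (hγ i) hχs.continuous hχΩ
  have hz : ∀ p, p ∉ tsupport ζ → ζ p = 0 := fun p hp => image_eq_zero_of_notMem_tsupport hp
  have hdz : ∀ p, p ∉ tsupport ζ → fderiv ℝ ζ p = 0 := fun p hp => by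
    by_contra h
    exact hp (support_fderiv_subset ℝ h)
  -- integrability of the LHS pieces (cutoff versions)
  have hPA : Integrable (fun p => finner (χ p • a p)
      (fderiv ℝ ζ p v0 + (-1 : ℝ) • ⁅χ p • ν p, ζ p⁆)) volume :=
    integrable_piece v0 (-1) hA.continuous hN hζ1 hζc
  have hPi : ∀ i : Fin k, Integrable (fun p => finner (χ p • b i p)
      (fderiv ℝ ζ p (e i) + (1 : ℝ) • ⁅χ p • γ i p, ζ p⁆)) volume :=
    fun i => integrable_piece (e i) 1 (hB i).continuous (hΓ i) hζ1 hζc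
  -- integrability of the RHS pieces
  have hQA : Integrable (fun p => finner ((-1 : ℝ) • adStar (χ p • ν p) (χ p • a p)
      - fderiv ℝ (fun p => χ p • a p) p v0) (ζ p)) volume := by
    refine integrable_finner_left ?_ hcζ hζc
    exact ((continuous_adStar_pair hN hA.continuous).const_smul (-1 : ℝ)).sub
      ((hA.continuous_fderiv one_ne_zero).clm_apply continuous_const)
  have hQi : ∀ i : Fin k, Integrable (fun p => finner
      ((1 : ℝ) • adStar (χ p • γ i p) (χ p • b i p)
        - fderiv ℝ (fun p => χ p • b i p) p (e i)) (ζ p)) volume := by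
    intro i
    refine integrable_finner_left ?_ hcζ hζc
    exact ((continuous_adStar_pair (hΓ i) (hB i).continuous).const_smul (1 : ℝ)).sub
      (((hB i).continuous_fderiv one_ne_zero).clm_apply continuous_const)
  calc
    ∫ p in Ω, (finner (a p) (fderiv ℝ ζ p v0 - ⁅ν p, ζ p⁆)
        - ∑ i : Fin k, finner (b i p) (fderiv ℝ ζ p (e i) + ⁅γ i p, ζ p⁆))
      = ∫ p in Ω, (finner (χ p • a p) (fderiv ℝ ζ p v0 + (-1 : ℝ) • ⁅χ p • ν p, ζ p⁆)
          - ∑ i : Fin k, finner (χ p • b i p)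
              (fderiv ℝ ζ p (e i) + (1 : ℝ) • ⁅χ p • γ i p, ζ p⁆)) := by
        refine setIntegral_congr_fun hΩ.measurableSet (fun p hp => ?_)
        by_cases hpU : p ∈ U
        · have h1 : χ p = 1 := hU1 p hpU
          simp [h1, sub_eq_add_neg]
        · have hpt : p ∉ tsupport ζ := fun h => hpU (hKU h)
          simp [hz p hpt, hdz p hpt, Ring.lie_def]
    _ = ∫ p, (finner (χ p • a p) (fderiv ℝ ζ p v0 + (-1 : ℝ) • ⁅χ p • ν p, ζ p⁆)
          - ∑ i : Fin k, finner (χ p • b i p)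
              (fderiv ℝ ζ p (e i) + (1 : ℝ) • ⁅χ p • γ i p, ζ p⁆)) := by
        refine setIntegral_eq_integral_of_forall_compl_eq_zero (fun p hp => ?_)
        have hpt : p ∉ tsupport ζ := fun h => hp (hζΩ h)
        simp [hz p hpt, hdz p hpt, Ring.lie_def]
    _ = (∫ p, finner (χ p • a p) (fderiv ℝ ζ p v0 + (-1 : ℝ) • ⁅χ p • ν p, ζ p⁆))
          - ∑ i : Fin k, ∫ p, finner (χ p • b i p)
              (fderiv ℝ ζ p (e i) + (1 : ℝ) • ⁅χ p • γ i p, ζ p⁆) := by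
        rw [integral_sub hPA (integrable_finset_sum _ (fun i _ => hPi i)),
          integral_finset_sum _ (fun i _ => hPi i)]
    _ = (∫ p, finner ((-1 : ℝ) • adStar (χ p • ν p) (χ p • a p)
            - fderiv ℝ (fun p => χ p • a p) p v0) (ζ p))
          - ∑ i : Fin k, ∫ p, finner ((1 : ℝ) • adStar (χ p • γ i p) (χ p • b i p)
              - fderiv ℝ (fun p => χ p • b i p) p (e i)) (ζ p) := by
        rw [piece _ _ ζ v0 (-1) hA hN hζs hζc]
        congr 1
        exact Finset.sum_congr rfl (fun i _ => piece _ _ ζ (e i) 1 (hB i) (hΓ i) hζs hζc)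
    _ = ∫ p, finner (((-1 : ℝ) • adStar (χ p • ν p) (χ p • a p)
            - fderiv ℝ (fun p => χ p • a p) p v0)
          - ∑ i : Fin k, ((1 : ℝ) • adStar (χ p • γ i p) (χ p • b i p)
              - fderiv ℝ (fun p => χ p • b i p) p (e i))) (ζ p) := by
        rw [show (fun p => finner (((-1 : ℝ) • adStar (χ p • ν p) (χ p • a p)
              - fderiv ℝ (fun p => χ p • a p) p v0)
            - ∑ i : Fin k, ((1 : ℝ) • adStar (χ p • γ i p) (χ p • b i p)
              - fderiv ℝ (fun p => χ p • b i p) p (e i))) (ζ p))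
          = fun p => finner ((-1 : ℝ) • adStar (χ p • ν p) (χ p • a p)
              - fderiv ℝ (fun p => χ p • a p) p v0) (ζ p)
            - ∑ i : Fin k, finner ((1 : ℝ) • adStar (χ p • γ i p) (χ p • b i p)
              - fderiv ℝ (fun p => χ p • b i p) p (e i)) (ζ p)
          from funext fun p => by rw [finner_sub_left, finner_sum_left]]
        rw [integral_sub hQA (integrable_finset_sum _ (fun i _ => hQi i)),
          integral_finset_sum _ (fun i _ => hQi i)]
    _ = ∫ p in Ω, finner ((-adStar (ν p) (a p) - fderiv ℝ a p v0)
          - ∑ i : Fin k, (adStar (γ i p) (b i p) - fderiv ℝ (b i) p (e i))) (ζ p) := by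
        rw [← setIntegral_eq_integral_of_forall_compl_eq_zero (s := Ω)]
        · refine setIntegral_congr_fun hΩ.measurableSet (fun p hp => ?_)
          by_cases hzp : ζ p = 0
          · simp [hzp]
          · have hpU : p ∈ U := hKU (subset_tsupport ζ hzp)
            have h1 : χ p = 1 := hU1 p hpU
            have hfa : fderiv ℝ (fun p => χ p • a p) p = fderiv ℝ a p :=
              fderiv_cutoff_smul_eq hUo hU1 hpU
            have hfb : ∀ i, fderiv ℝ (fun p => χ p • b i p) p = fderiv ℝ (b i) p :=
              fun i => fderiv_cutoff_smul_eq hUo hU1 hpU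
            simp [h1, hfa, hfb]
        · intro p hp
          have hpt : p ∉ tsupport ζ := fun h => hp (hζΩ h)
          simp [hz p hpt]

end Star

section Final

variable {k n : ℕ}

local notation "X" => (ℝ × EuclideanSpace ℝ (Fin k))
local notation "Mat" => Matrix (Fin n) (Fin n) ℝ

open EPaux

lemma zero_of_variational {Ω : Set X} (hΩ : IsOpen Ω)
    (a : X → Mat) (b : Fin k → X → Mat) (ν : X → Mat) (γ : Fin k → X → Mat)
    (ha : ContDiffOn ℝ 1 a Ω) (hb : ∀ i, ContDiffOn ℝ 1 (b i) Ω)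
    (hν : ContinuousOn ν Ω) (hγ : ∀ i, ContinuousOn (γ i) Ω)
    (h : ∀ ζ : X → Mat, ContDiff ℝ (⊤ : ℕ∞) ζ → HasCompactSupport ζ → tsupport ζ ⊆ Ω →
      ∫ p in Ω,
        (finner (a p) (fderiv ℝ ζ p ((1 : ℝ), (0 : EuclideanSpace ℝ (Fin k))) - ⁅ν p, ζ p⁆)
          - ∑ i : Fin k, finner (b i p)
              (fderiv ℝ ζ p ((0 : ℝ), EuclideanSpace.single i (1 : ℝ)) + ⁅γ i p, ζ p⁆)) = 0) :
    ∀ p ∈ Ω,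
      ((-adStar (ν p) (a p) - fderiv ℝ a p ((1 : ℝ), (0 : EuclideanSpace ℝ (Fin k))))
        - ∑ i : Fin k, (adStar (γ i p) (b i p)
            - fderiv ℝ (b i) p ((0 : ℝ), EuclideanSpace.single i (1 : ℝ)))) = 0 := by
  classical
  set Gf : X → Mat := fun q =>
    ((-adStar (ν q) (a q) - fderiv ℝ a q ((1 : ℝ), (0 : EuclideanSpace ℝ (Fin k))))
      - ∑ i : Fin k, (adStar (γ i q) (b i q)
          - fderiv ℝ (b i) q ((0 : ℝ), EuclideanSpace.single i (1 : ℝ)))) with hGf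
  have hGcont : ContinuousOn Gf Ω := by
    have h1 : ContinuousOn (fun q => fderiv ℝ a q
        ((1 : ℝ), (0 : EuclideanSpace ℝ (Fin k)))) Ω :=
      (ha.continuousOn_fderiv_of_isOpen hΩ le_rfl).clm_apply continuousOn_const
    have h2 : ContinuousOn (fun q => adStar (ν q) (a q)) Ω :=
      continuousOn_adStar_pair hν ha.continuousOn
    have h3 : ∀ i : Fin k, ContinuousOn (fun q => adStar (γ i q) (b i q)
        - fderiv ℝ (b i) q ((0 : ℝ), EuclideanSpace.single i (1 : ℝ))) Ω := fun i =>
      (continuousOn_adStar_pair (hγ i) (hb i).continuousOn).sub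
        (((hb i).continuousOn_fderiv_of_isOpen hΩ le_rfl).clm_apply continuousOn_const)
    exact ((h2.neg.sub h1)).sub (continuousOn_finset_sum _ (fun i _ => h3 i))
  -- for each matrix entry, test against arbitrary smooth compactly supported scalar functions
  have key : ∀ r s : Fin n, ∀ q ∈ Ω, finner (Gf q) (Matrix.single r s 1) = 0 := by
    intro r s
    have hfc : ContinuousOn (fun q => finner (Gf q) (Matrix.single r s 1)) Ω := by
      exact (finnerL.continuous.comp_continuousOn hGcont).clm_apply continuousOn_const
    refine eqOn_zero_of_ae (μ := volume) hΩ hfc ?_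
    refine hΩ.ae_eq_zero_of_integral_contDiff_smul_eq_zero
      (hfc.locallyIntegrableOn hΩ.measurableSet) (fun g hg hgc hgΩ => ?_)
    -- build the test function ζ = g • stdBasisMatrix
    set ζ : X → Mat := fun q => g q • Matrix.single r s 1 with hζdef
    have hζs : ContDiff ℝ (⊤ : ℕ∞) ζ := hg.smul contDiff_const
    have hζc : HasCompactSupport ζ :=
      HasCompactSupport.of_support_subset_isCompact hgc
        (fun x hx => subset_tsupport g (fun h0 => hx (by simp [hζdef, h0])))
    have hζΩ : tsupport ζ ⊆ Ω := by
      refine subset_trans (closure_minimal ?_ (isClosed_closure (s := Function.support g))) hgΩ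
      exact fun x hx => subset_tsupport g (fun h0 => hx (by simp [hζdef, h0]))
    have h0 := h ζ hζs hζc hζΩ
    rw [star_lemma hΩ a b ν γ ha hb hν hγ ζ hζs hζc hζΩ] at h0
    have h1 : ∀ q, finner (Gf q) (ζ q)
        = g q • finner (Gf q) (Matrix.single r s 1) := fun q => by
      rw [hζdef]
      simp only [finner_smul_right, smul_eq_mul]
    rw [show (∫ p in Ω, finner (Gf p) (ζ p)) =
        ∫ p in Ω, g p • finner (Gf p) (Matrix.single r s 1)
      from integral_congr_ae (Filter.Eventually.of_forall fun p => h1 p)] at h0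
    rw [← h0]
    symm
    refine setIntegral_eq_integral_of_forall_compl_eq_zero (fun x hx => ?_)
    have : g x = 0 := image_eq_zero_of_notMem_tsupport (fun hs => hx (hgΩ hs))
    simp [this]
  intro p hp
  ext r s
  have := key r s p hp
  rw [finner_stdBasisMatrix] at this
  simpa [hGf] using this

end Final

/-- Equivalence between the constrained variational principle of affine Euler–Poincaré
reduction (variations `δν = ζ̇ − [ν,ζ]`, `δγ = −d^γζ`) and the affine Euler–Poincaré
equations `∂_t(δl/δν) = −ad*_ν(δl/δν) + div^γ(δl/δγ)`, with `a = δl/δν`, `b = δl/δγ`. -/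
theorem affine_euler_poincare_trivial
    {k n : ℕ} (hk : 1 ≤ k) (hn : 1 ≤ n)
    (Ω : Set (ℝ × EuclideanSpace ℝ (Fin k))) (hΩ : IsOpen Ω)
    (a : ℝ × EuclideanSpace ℝ (Fin k) → Matrix (Fin n) (Fin n) ℝ)
    (b : Fin k → ℝ × EuclideanSpace ℝ (Fin k) → Matrix (Fin n) (Fin n) ℝ)
    (ν : ℝ × EuclideanSpace ℝ (Fin k) → Matrix (Fin n) (Fin n) ℝ)
    (γ : Fin k → ℝ × EuclideanSpace ℝ (Fin k) → Matrix (Fin n) (Fin n) ℝ)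
    (ha : ContDiffOn ℝ 1 a Ω) (hb : ∀ i, ContDiffOn ℝ 1 (b i) Ω)
    (hν : ContinuousOn ν Ω) (hγ : ∀ i, ContinuousOn (γ i) Ω) :
    (∀ ζ : ℝ × EuclideanSpace ℝ (Fin k) → Matrix (Fin n) (Fin n) ℝ,
        ContDiff ℝ (⊤ : ℕ∞) ζ → HasCompactSupport ζ → tsupport ζ ⊆ Ω →
        ∫ p in Ω,
          (finner (a p) (fderiv ℝ ζ p ((1 : ℝ), (0 : EuclideanSpace ℝ (Fin k)))
              - ⁅ν p, ζ p⁆)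
            - ∑ i : Fin k,
              finner (b i p)
                (fderiv ℝ ζ p ((0 : ℝ), EuclideanSpace.single i (1 : ℝ))
                  + ⁅γ i p, ζ p⁆)) = 0)
    ↔ (∀ p ∈ Ω,
        fderiv ℝ a p ((1 : ℝ), (0 : EuclideanSpace ℝ (Fin k)))
          = - adStar (ν p) (a p)
            + ∑ i : Fin k, fderiv ℝ (b i) p ((0 : ℝ), EuclideanSpace.single i (1 : ℝ))
            - ∑ i : Fin k, adStar (γ i p) (b i p)) := by
  constructor
  · intro h p hp
    have hG := zero_of_variational hΩ a b ν γ ha hb hν hγ h p hp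
    rw [Finset.sum_sub_distrib] at hG
    calc fderiv ℝ a p ((1 : ℝ), (0 : EuclideanSpace ℝ (Fin k)))
        = fderiv ℝ a p ((1 : ℝ), (0 : EuclideanSpace ℝ (Fin k)))
          + (((-adStar (ν p) (a p)
              - fderiv ℝ a p ((1 : ℝ), (0 : EuclideanSpace ℝ (Fin k))))
            - ((∑ i : Fin k, adStar (γ i p) (b i p))
              - ∑ i : Fin k, fderiv ℝ (b i) p
                  ((0 : ℝ), EuclideanSpace.single i (1 : ℝ))))) := by
          rw [hG, add_zero]
      _ = - adStar (ν p) (a p)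
            + ∑ i : Fin k, fderiv ℝ (b i) p ((0 : ℝ), EuclideanSpace.single i (1 : ℝ))
            - ∑ i : Fin k, adStar (γ i p) (b i p) := by abel
  · intro h ζ hζs hζc hζΩ
    rw [star_lemma hΩ a b ν γ ha hb hν hγ ζ hζs hζc hζΩ]
    have hEq : Set.EqOn (fun p =>
        finner ((-adStar (ν p) (a p)
            - fderiv ℝ a p ((1 : ℝ), (0 : EuclideanSpace ℝ (Fin k))))
          - ∑ i : Fin k, (adStar (γ i p) (b i p)
              - fderiv ℝ (b i) p ((0 : ℝ), EuclideanSpace.single i (1 : ℝ)))) (ζ p))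
        (fun _ => (0 : ℝ)) Ω := by
      intro p hp
      have h0 : (-adStar (ν p) (a p)
            - fderiv ℝ a p ((1 : ℝ), (0 : EuclideanSpace ℝ (Fin k))))
          - ∑ i : Fin k, (adStar (γ i p) (b i p)
              - fderiv ℝ (b i) p ((0 : ℝ), EuclideanSpace.single i (1 : ℝ))) = 0 := by
        rw [Finset.sum_sub_distrib, h p hp]
        abel
      show finner _ (ζ p) = (0:ℝ)
      rw [h0]
      simp [finner]
    rw [setIntegral_congr_fun hΩ.measurableSet hEq]
    simp
end

section
/- Let n ≥ 1, let E be a real normed vector space, and let χ : E → Matrix (Fin n) (Fin n) ℝ be twice continuously differentiable with χ(x) invertible for every x. Define the matrix-valued one-form γ(x)(w) := −(dχ(x) w) * χ(x)⁻¹. Then for every x ∈ E and all u, w ∈ E: (dγ(x) u)(w) − (dγ(x) w)(u) + ⁅γ(x) u, γ(x) w⁆ = 0, where dγ(x) : E →L (E →L Matrix) is the Fréchet derivative of γ at x. In other words, the local connection form γ = −(dχ)χ⁻¹ associated to a section χ of a trivial principal bundle is flat: d^γγ = 0. -/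
open MeasureTheory

attribute [local instance] Matrix.normedAddCommGroup Matrix.normedSpace

section aux
variable {n : ℕ}
local notation "M" => Matrix (Fin n) (Fin n) ℝ

noncomputable instance : NormedAddCommGroup (M →L[ℝ] M) :=
  ContinuousLinearMap.toNormedAddCommGroup

noncomputable instance : NormedSpace ℝ (M →L[ℝ] M) :=
  ContinuousLinearMap.toNormedSpace

@[simp] lemma mulR_apply (A B : M) : mulR A B = B * A := rfl

noncomputable def entryCLM (i j : Fin n) : M →L[ℝ] ℝ :=
  LinearMap.toContinuousLinearMap
    { toFun := fun A => A i j
      map_add' := fun _ _ => rfl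
      map_smul' := fun _ _ => rfl }

lemma contDiff_entry (i j : Fin n) : ContDiff ℝ 1 (fun A : M => A i j) :=
  (entryCLM i j).contDiff

lemma contDiff_matrix_det : ContDiff ℝ 1 (fun A : M => A.det) := by
  have : (fun A : M => A.det)
      = fun A : M => ∑ σ : Equiv.Perm (Fin n), (Equiv.Perm.sign σ : ℝ) * ∏ i, A (σ i) i := by
    funext A
    rw [Matrix.det_apply]
    simp [Units.smul_def, zsmul_eq_mul]
  rw [this]
  exact ContDiff.sum fun σ _ =>
    contDiff_const.mul (contDiff_prod fun i _ => contDiff_entry (σ i) i)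

lemma contDiff_matrix_adjugate : ContDiff ℝ 1 (fun A : M => A.adjugate) := by
  rw [show (fun A : M => A.adjugate)
      = fun A : M => Matrix.of fun i j => (A.updateRow j (Pi.single i 1)).det by
    funext A; ext i j; simp [Matrix.adjugate_apply]]
  apply contDiff_pi.2; intro i
  apply contDiff_pi.2; intro j
  refine contDiff_matrix_det.comp ?_
  apply contDiff_pi.2; intro k
  apply contDiff_pi.2; intro l
  by_cases h : k = j
  · subst h; simp only [Matrix.updateRow_self]; exact contDiff_const
  · simp only [Matrix.updateRow_apply, if_neg h]; exact contDiff_entry k l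

/-- `A ↦ mulR A` bundled as a continuous linear map. -/
noncomputable def mulRc : M →L[ℝ] M →L[ℝ] M :=
  LinearMap.toContinuousLinearMap
    { toFun := fun A => mulR A
      map_add' := by intro A B; ext X; simp [mul_add]
      map_smul' := by intro c A; ext X; simp [Matrix.mul_smul] }

@[simp] lemma mulRc_apply (A B : M) : mulRc A B = B * A := rfl

variable {E : Type*} [NormedAddCommGroup E] [NormedSpace ℝ E]

lemma contDiffAt_inv_matrix {χ : E → M} (hχ : ContDiff ℝ 1 χ) (hinv : ∀ x, IsUnit (χ x)) (x : E) :
    ContDiffAt ℝ 1 (fun y => (χ y)⁻¹) x := by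
  have hdet : (χ x).det ≠ 0 :=
    IsUnit.ne_zero ((Matrix.isUnit_iff_isUnit_det (χ x)).mp (hinv x))
  have heq : (fun y => (χ y)⁻¹) = fun y => ((χ y).det)⁻¹ • (χ y).adjugate := by
    funext y
    rw [Matrix.inv_def, Ring.inverse_eq_inv']
  rw [heq]
  exact ((contDiff_matrix_det.comp hχ).contDiffAt.inv hdet).smul
    (contDiff_matrix_adjugate.comp hχ).contDiffAt
end aux


/-- The local connection form `γ = −(dχ)χ⁻¹` associated to a section `χ` of a trivial
principal bundle is flat: `(dγ(x) u)(w) − (dγ(x) w)(u) + ⁅γ(x) u, γ(x) w⁆ = 0`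
(the right Maurer–Cartan equation in matrix form). -/
theorem maurer_cartan_flatness
    {n : ℕ} (hn : 1 ≤ n)
    {E : Type*} [NormedAddCommGroup E] [NormedSpace ℝ E]
    (χ : E → Matrix (Fin n) (Fin n) ℝ)
    (hχ : ContDiff ℝ 2 χ)
    (hinv : ∀ x, IsUnit (χ x))
    (γ : E → (E →L[ℝ] Matrix (Fin n) (Fin n) ℝ))
    (hγ : ∀ x, γ x = -((mulR ((χ x)⁻¹)).comp (fderiv ℝ χ x))) :
    ∀ (x u w : E),
      (fderiv ℝ γ x u) w - (fderiv ℝ γ x w) u + ⁅γ x u, γ x w⁆ = 0 := by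
  intro x u w
  have hχ1 : ContDiff ℝ 1 χ := hχ.of_le (by norm_num)
  have hdet : IsUnit (χ x).det := (Matrix.isUnit_iff_isUnit_det (χ x)).mp (hinv x)
  set ι : E → Matrix (Fin n) (Fin n) ℝ := fun y => (χ y)⁻¹ with hι_def
  set ι' : E →L[ℝ] Matrix (Fin n) (Fin n) ℝ := fderiv ℝ ι x with hι'_def
  set Dχ : E → (E →L[ℝ] Matrix (Fin n) (Fin n) ℝ) := fderiv ℝ χ with hDχ_def
  set D2 : E →L[ℝ] E →L[ℝ] Matrix (Fin n) (Fin n) ℝ := fderiv ℝ Dχ x with hD2_def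
  have hιx : HasFDerivAt ι ι' x :=
    ((contDiffAt_inv_matrix hχ1 hinv x).differentiableAt one_ne_zero).hasFDerivAt
  have hχx : HasFDerivAt χ (Dχ x) x :=
    ((hχ1.differentiable one_ne_zero) x).hasFDerivAt
  have hDχx : HasFDerivAt Dχ D2 x :=
    (((hχ.fderiv_right (by norm_num)).differentiable one_ne_zero) x).hasFDerivAt
  -- the derivative of the constant function ι * χ = 1 vanishes
  have hC : HasFDerivAt (fun y => mulRc (χ y)) (mulRc.comp (Dχ x)) x :=
    mulRc.hasFDerivAt.comp x hχx
  have h1 : HasFDerivAt (fun y => (mulRc (χ y)) (ι y))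
      ((mulRc (χ x)).comp ι' + (show E →L[ℝ] Matrix (Fin n) (Fin n) ℝ from (mulRc.comp (Dχ x)).flip (ι x))) x := hC.clm_apply hιx
  have h2 : (fun y => (mulRc (χ y)) (ι y)) = fun _ => (1 : Matrix (Fin n) (Fin n) ℝ) := by
    funext y
    simp only [mulRc_apply, hι_def]
    exact Matrix.nonsing_inv_mul _ ((Matrix.isUnit_iff_isUnit_det (χ y)).mp (hinv y))
  rw [h2] at h1
  have hL : (mulRc (χ x)).comp ι' + (show E →L[ℝ] Matrix (Fin n) (Fin n) ℝ from (mulRc.comp (Dχ x)).flip (ι x)) = 0 :=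
    h1.unique (hasFDerivAt_const 1 x)
  have hι'v : ∀ v : E, ι' v = -(ι x * (Dχ x v) * ι x) := by
    intro v
    have h0 : ι' v * χ x + ι x * Dχ x v = 0 := by
      have := DFunLike.congr_fun hL v
      exact this
    have h3 : ι' v * χ x = -(ι x * Dχ x v) := eq_neg_of_add_eq_zero_left h0
    calc ι' v = ι' v * (χ x * ι x) := by
          rw [Matrix.mul_nonsing_inv _ hdet, mul_one]
      _ = (ι' v * χ x) * ι x := by rw [mul_assoc]
      _ = -(ι x * Dχ x v) * ι x := by rw [h3]
      _ = -(ι x * Dχ x v * ι x) := by noncomm_ring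
  -- derivative of γ
  have hγfun : γ = fun y => -((mulR (ι y)).comp (Dχ y)) := funext hγ
  have hcder : HasFDerivAt (fun y => mulR (ι y)) (mulRc.comp ι') x :=
    mulRc.hasFDerivAt.comp x hιx
  have hmain : HasFDerivAt (fun y => -((mulR (ι y)).comp (Dχ y)))
      (-(((ContinuousLinearMap.compL ℝ E (Matrix (Fin n) (Fin n) ℝ)
            (Matrix (Fin n) (Fin n) ℝ) (mulR (ι x))).comp D2
          + ((ContinuousLinearMap.compL ℝ E (Matrix (Fin n) (Fin n) ℝ)
            (Matrix (Fin n) (Fin n) ℝ)).flip (Dχ x)).comp (mulRc.comp ι')))) x :=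
    (hcder.clm_comp hDχx).neg
  have hsymm : D2 u w = D2 w u :=
    (hχ.contDiffAt.isSymmSndFDerivAt (by simp)).eq u w
  erw [hγfun, @HasFDerivAt.fderiv _ _ _ _ _ _ _ _ _ _ _ _ _ _ _
    (by exact (inferInstance : ContinuousAdd (E →L[ℝ] Matrix (Fin n) (Fin n) ℝ)))
    (by exact (inferInstance : ContinuousSMul ℝ (E →L[ℝ] Matrix (Fin n) (Fin n) ℝ)))
    (by exact (inferInstance : T2Space (E →L[ℝ] Matrix (Fin n) (Fin n) ℝ))) hmain]
  show -(D2 u w * ι x + Dχ x w * ι' u) - -(D2 w u * ι x + Dχ x u * ι' w)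
      + ⁅-(Dχ x u * ι x), -(Dχ x w * ι x)⁆ = 0
  rw [Ring.lie_def]
  rw [hι'v u, hι'v w, hsymm]
  noncomm_ring
end

section
/- Let n ≥ 1, let E be a real normed vector space, let ν : ℝ × E → Matrix (Fin n) (Fin n) ℝ and γ : ℝ × E → (E →L[ℝ] Matrix (Fin n) (Fin n) ℝ) be continuously differentiable. Define the matrix-valued one-form A on spacetime ℝ × E by A(t,x)(s,w) := −s • ν(t,x) + γ(t,x)(w). Then A is flat — i.e. for every point p = (t,x) and all tangent vectors P, Q ∈ ℝ × E one has (dA(p) P)(Q) − (dA(p) Q)(P) + ⁅A(p) P, A(p) Q⁆ = 0 — if and only if both of the following hold at every (t,x): (advection) for all w ∈ E, ∂_t(γ(t,x)(w)) + (d_xν(t,x))(w) + ⁅γ(t,x)(w), ν(t,x)⁆ = 0; and (flatness of γ) for all u, w ∈ E, (d_xγ(t,x) u)(w) − (d_xγ(t,x) w)(u) + ⁅γ(t,x)(u), γ(t,x)(w)⁆ = 0. -/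
open MeasureTheory

attribute [local instance] Matrix.normedAddCommGroup Matrix.normedSpace

set_option maxHeartbeats 1000000 in
/-- The compatibility condition of covariant Euler–Poincaré reduction: for the connection
`A^σ = (−ν, γ)` on the trivial bundle over spacetime `ℝ × M`, flatness of `A`
(`d^{A}A = 0`) is equivalent to the affine advection equation `γ̇ + d^γν = 0`
together with the vanishing of the curvature `d^γγ = 0`. -/
theorem spacetime_flatness_iff_advection_and_flatness
    {n : ℕ} (hn : 1 ≤ n)
    {E : Type*} [NormedAddCommGroup E] [NormedSpace ℝ E]
    (ν : ℝ × E → Matrix (Fin n) (Fin n) ℝ)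
    (γ : ℝ × E → (E →L[ℝ] Matrix (Fin n) (Fin n) ℝ))
    (hν : ContDiff ℝ 1 ν) (hγ : @ContDiff ℝ _ _ _ _ _ ContinuousLinearMap.toNormedAddCommGroup
      ContinuousLinearMap.toNormedSpace 1 γ)
    (A : ℝ × E → (ℝ × E →L[ℝ] Matrix (Fin n) (Fin n) ℝ))
    (hA : ∀ p, A p = (ContinuousLinearMap.fst ℝ ℝ E).smulRight (-(ν p))
        + (γ p).comp (ContinuousLinearMap.snd ℝ ℝ E)) :
    (∀ (p P Q : ℝ × E),
        (fderiv ℝ A p P) Q - (fderiv ℝ A p Q) P + ⁅A p P, A p Q⁆ = 0)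
    ↔ ((∀ (t : ℝ) (x : E) (w : E),
          deriv (fun s => γ (s, x) w) t + fderiv ℝ (fun y => ν (t, y)) x w
            + ⁅γ (t, x) w, ν (t, x)⁆ = 0)
        ∧ (∀ (t : ℝ) (x u w : E),
          (fderiv ℝ (fun y => γ (t, y)) x u) w - (fderiv ℝ (fun y => γ (t, y)) x w) u
            + ⁅γ (t, x) u, γ (t, x) w⁆ = 0)) := by
  classical
  letI : LieRing (Matrix (Fin n) (Fin n) ℝ) := LieRing.ofAssociativeRing
  letI : NormedAddCommGroup (E →L[ℝ] Matrix (Fin n) (Fin n) ℝ) :=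
    ContinuousLinearMap.toNormedAddCommGroup
  letI : NormedSpace ℝ (E →L[ℝ] Matrix (Fin n) (Fin n) ℝ) := ContinuousLinearMap.toNormedSpace
  letI : NormedAddCommGroup (ℝ × E →L[ℝ] Matrix (Fin n) (Fin n) ℝ) :=
    ContinuousLinearMap.toNormedAddCommGroup
  letI : NormedSpace ℝ (ℝ × E →L[ℝ] Matrix (Fin n) (Fin n) ℝ) := ContinuousLinearMap.toNormedSpace
  have hνd : Differentiable ℝ ν := hν.differentiable one_ne_zero
  have hγd : Differentiable ℝ γ := hγ.differentiable one_ne_zero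
  set S : Matrix (Fin n) (Fin n) ℝ →L[ℝ] (ℝ × E →L[ℝ] Matrix (Fin n) (Fin n) ℝ) :=
    ContinuousLinearMap.smulRightL ℝ (ℝ × E) (Matrix (Fin n) (Fin n) ℝ)
      (ContinuousLinearMap.fst ℝ ℝ E) with hS
  set C : (E →L[ℝ] Matrix (Fin n) (Fin n) ℝ) →L[ℝ]
      (ℝ × E →L[ℝ] Matrix (Fin n) (Fin n) ℝ) :=
    (ContinuousLinearMap.compL ℝ (ℝ × E) E (Matrix (Fin n) (Fin n) ℝ)).flip
      (ContinuousLinearMap.snd ℝ ℝ E) with hC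
  have hSa : ∀ (m : Matrix (Fin n) (Fin n) ℝ) (Q : ℝ × E), S m Q = Q.1 • m := fun _ _ => rfl
  have hCa : ∀ (g : E →L[ℝ] Matrix (Fin n) (Fin n) ℝ) (Q : ℝ × E), C g Q = g Q.2 :=
    fun _ _ => rfl
  have hA' : ∀ p, A p = C (γ p) - S (ν p) := by
    intro p
    rw [hA]
    refine ContinuousLinearMap.ext fun Q => ?_
    rw [ContinuousLinearMap.add_apply, ContinuousLinearMap.sub_apply, hSa, hCa,
      ContinuousLinearMap.smulRight_apply, ContinuousLinearMap.comp_apply]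
    simp [sub_eq_neg_add, add_comm]
  -- the derivative of A
  have key : ∀ p (P Q : ℝ × E),
      fderiv ℝ A p P Q = fderiv ℝ γ p P Q.2 - Q.1 • fderiv ℝ ν p P := by
    intro p P Q
    have hAf : A = fun q => C (γ q) - S (ν q) := funext hA'
    have hd : HasFDerivAt A
        ((C.comp (fderiv ℝ γ p)) - (S.comp (fderiv ℝ ν p))) p := by
      rw [hAf]
      exact (C.hasFDerivAt.comp p (hγd p).hasFDerivAt).sub
        (S.hasFDerivAt.comp p (hνd p).hasFDerivAt)
    rw [hd.fderiv, ContinuousLinearMap.sub_apply, ContinuousLinearMap.sub_apply,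
      ContinuousLinearMap.comp_apply, ContinuousLinearMap.comp_apply, hSa, hCa]
  have Apt : ∀ p (Q : ℝ × E), A p Q = γ p Q.2 - Q.1 • ν p := by
    intro p Q
    rw [hA' p, ContinuousLinearMap.sub_apply, hSa, hCa]
  -- partial derivative translations
  have ht : ∀ (t : ℝ) (x : E) (w : E),
      deriv (fun s => γ (s, x) w) t = fderiv ℝ γ (t, x) (1, 0) w := by
    intro t x w
    have h1 : HasDerivAt (fun s : ℝ => (s, x)) ((1:ℝ), (0:E)) t :=
      (hasDerivAt_id t).prodMk (hasDerivAt_const t x)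
    have h2 : HasDerivAt (fun s : ℝ => γ (s, x)) (fderiv ℝ γ (t, x) (1, 0)) t :=
      (hγd (t, x)).hasFDerivAt.comp_hasDerivAt t h1
    have h3 : HasDerivAt (fun s : ℝ => γ (s, x) w) (fderiv ℝ γ (t, x) (1, 0) w) t :=
      (ContinuousLinearMap.apply ℝ (Matrix (Fin n) (Fin n) ℝ) w).hasFDerivAt.comp_hasDerivAt t h2
    exact h3.deriv
  have hinr : ∀ (t : ℝ) (x : E),
      HasFDerivAt (fun y : E => ((t : ℝ), y))
        (((0 : E →L[ℝ] ℝ)).prod (ContinuousLinearMap.id ℝ E)) x :=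
    fun t x => (hasFDerivAt_const t x).prodMk (hasFDerivAt_id x)
  have hxν : ∀ (t : ℝ) (x : E) (w : E),
      fderiv ℝ (fun y => ν (t, y)) x w = fderiv ℝ ν (t, x) (0, w) := by
    intro t x w
    have hcomp : (fun y => ν (t, y)) = ν ∘ Prod.mk t := rfl
    erw [hcomp, ((hνd (t, x)).hasFDerivAt.comp x (hinr t x)).fderiv]
    rfl
  have hxγ : ∀ (t : ℝ) (x : E) (u : E),
      fderiv ℝ (fun y => γ (t, y)) x u = fderiv ℝ γ (t, x) (0, u) := by
    intro t x u
    have hcomp : (fun y => γ (t, y)) = γ ∘ Prod.mk t := rfl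
    erw [hcomp, fderiv_comp x (hγd (t, x)) (hinr t x).differentiableAt, (hinr t x).fderiv]
    rfl
  constructor
  · intro H
    constructor
    · intro t x w
      have h := H (t, x) (1, 0) (0, w)
      rw [key, key, Apt, Apt] at h
      rw [ht, hxν]
      simp only [zero_smul, one_smul, map_zero, sub_zero, zero_sub] at h
      rw [neg_lie, lie_skew, sub_neg_eq_add] at h
      exact h
    · intro t x u w
      have h := H (t, x) (0, u) (0, w)
      rw [key, key, Apt, Apt] at h
      rw [hxγ, hxγ]
      simpa using h
  · rintro ⟨h1, h2⟩ ⟨t, x⟩ P Q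
    have e1 : ∀ w : E, fderiv ℝ γ (t, x) (1, 0) w + fderiv ℝ ν (t, x) (0, w)
        + ⁅γ (t, x) w, ν (t, x)⁆ = 0 := by
      intro w
      have := h1 t x w
      rwa [ht, hxν] at this
    have e2 : ∀ u w : E, fderiv ℝ γ (t, x) (0, u) w - fderiv ℝ γ (t, x) (0, w) u
        + ⁅γ (t, x) u, γ (t, x) w⁆ = 0 := by
      intro u w
      have := h2 t x u w
      rwa [hxγ, hxγ] at this
    have dν : ∀ R : ℝ × E, fderiv ℝ ν (t, x) R
        = R.1 • fderiv ℝ ν (t, x) (1, 0) + fderiv ℝ ν (t, x) (0, R.2) := by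
      intro R
      conv_lhs => rw [show R = R.1 • ((1:ℝ), (0:E)) + ((0:ℝ), R.2) from by
        apply Prod.ext <;> simp]
      rw [map_add, _root_.map_smul]
    have dγ : ∀ R : ℝ × E, fderiv ℝ γ (t, x) R
        = R.1 • fderiv ℝ γ (t, x) (1, 0) + fderiv ℝ γ (t, x) (0, R.2) := by
      intro R
      conv_lhs => rw [show R = R.1 • ((1:ℝ), (0:E)) + ((0:ℝ), R.2) from by
        apply Prod.ext <;> simp]
      rw [map_add, _root_.map_smul]
    rw [key, key, Apt, Apt, dν P, dν Q, dγ P, dγ Q]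
    simp only [ContinuousLinearMap.add_apply, ContinuousLinearMap.smul_apply]
    -- expand the bracket
    simp only [sub_lie, lie_sub, smul_lie, lie_smul, lie_self, smul_zero, smul_smul]
    have goal_eq : P.1 • ((fderiv ℝ γ (t, x)) (1, 0)) Q.2 + ((fderiv ℝ γ (t, x)) (0, P.2)) Q.2 -
          Q.1 • (P.1 • (fderiv ℝ ν (t, x)) (1, 0) + (fderiv ℝ ν (t, x)) (0, P.2)) -
        (Q.1 • ((fderiv ℝ γ (t, x)) (1, 0)) P.2 + ((fderiv ℝ γ (t, x)) (0, Q.2)) P.2 -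
          P.1 • (Q.1 • (fderiv ℝ ν (t, x)) (1, 0) + (fderiv ℝ ν (t, x)) (0, Q.2))) +
      (⁅(γ (t, x)) P.2, (γ (t, x)) Q.2⁆ - P.1 • ⁅ν (t, x), (γ (t, x)) Q.2⁆
        - Q.1 • (⁅(γ (t, x)) P.2, ν (t, x)⁆ - 0))
        = P.1 • (((fderiv ℝ γ (t, x)) (1, 0)) Q.2 + (fderiv ℝ ν (t, x)) (0, Q.2)
            + ⁅(γ (t, x)) Q.2, ν (t, x)⁆)
          - Q.1 • (((fderiv ℝ γ (t, x)) (1, 0)) P.2 + (fderiv ℝ ν (t, x)) (0, P.2)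
            + ⁅(γ (t, x)) P.2, ν (t, x)⁆)
          + (((fderiv ℝ γ (t, x)) (0, P.2)) Q.2 - ((fderiv ℝ γ (t, x)) (0, Q.2)) P.2
            + ⁅(γ (t, x)) P.2, (γ (t, x)) Q.2⁆) := by
      rw [← lie_skew (ν (t, x)) ((γ (t, x)) Q.2)]
      module
    rw [goal_eq, e1, e1, e2]
    simp
end

section
/- Let n ≥ 1, let E be a real normed vector space, let U ⊆ E be open with a measure μ, and let L̄ : ℝ → Matrix (Fin n) (Fin n) ℝ → (E →L[ℝ] Matrix (Fin n) (Fin n) ℝ) → ℝ. Let χ : U → Matrix (Fin n) (Fin n) ℝ be differentiable with χ(m) invertible for all m ∈ U, let v : U → Matrix (Fin n) (Fin n) ℝ, and let γ₀ be a matrix-valued one-form on U. Assume the invariance: for all t, all matrices a, all B : E →L[ℝ] Matrix (Fin n) (Fin n) ℝ and all m ∈ U, L̄(t, a * χ(m)⁻¹, fun w => (B w) * χ(m)⁻¹) = L̄(t, a, B). Define ν(m) := v(m) * χ(m)⁻¹ and γ(m)(w) := χ(m) * (γ₀(m) w) * χ(m)⁻¹ − (dχ(m) w) * χ(m)⁻¹.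 Then for every t, ∫_U L̄(t, v(m), fun w => dχ(m) w − χ(m) * (γ₀(m) w)) dμ(m) = ∫_U L̄(t, ν(m), fun w => −(γ(m) w)) dμ(m). -/
open MeasureTheory

attribute [local instance] Matrix.normedAddCommGroup Matrix.normedSpace

/-- The reduced Lagrangians verify `l(t, ν, γ) = ∫ ℓ̄(t, ν, −γ) μ`, where `ν = vχ⁻¹` and
`γ = χγ₀χ⁻¹ + χd(χ⁻¹)`: the instantaneous Lagrangian evaluated on `(χ, v, γ₀)` equals
the reduced Lagrangian evaluated on `(ν, −γ)`. -/
theorem reduced_instantaneous_lagrangian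
    {n : ℕ} (hn : 1 ≤ n)
    {E : Type*} [NormedAddCommGroup E] [NormedSpace ℝ E]
    [MeasurableSpace E] [BorelSpace E]
    (U : Set E) (hU : IsOpen U) (μ : Measure E)
    (Lb : ℝ → Matrix (Fin n) (Fin n) ℝ → (E →L[ℝ] Matrix (Fin n) (Fin n) ℝ) → ℝ)
    (χ v : E → Matrix (Fin n) (Fin n) ℝ)
    (γ₀ : E → (E →L[ℝ] Matrix (Fin n) (Fin n) ℝ))
    (hχ : ∀ m ∈ U, DifferentiableAt ℝ χ m)
    (hχinv : ∀ m ∈ U, IsUnit (χ m))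
    (hLinv : ∀ (t : ℝ) (a : Matrix (Fin n) (Fin n) ℝ)
      (B : E →L[ℝ] Matrix (Fin n) (Fin n) ℝ), ∀ m ∈ U,
      Lb t (a * (χ m)⁻¹) ((mulR ((χ m)⁻¹)).comp B) = Lb t a B)
    (ν : E → Matrix (Fin n) (Fin n) ℝ)
    (hν : ∀ m, ν m = v m * (χ m)⁻¹)
    (γ : E → (E →L[ℝ] Matrix (Fin n) (Fin n) ℝ))
    (hγ : ∀ m, γ m =
      (mulR ((χ m)⁻¹)).comp ((mulL (χ m)).comp (γ₀ m))
        - (mulR ((χ m)⁻¹)).comp (fderiv ℝ χ m))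
    (t : ℝ) :
    ∫ m in U, Lb t (v m) (fderiv ℝ χ m - (mulL (χ m)).comp (γ₀ m)) ∂μ
      = ∫ m in U, Lb t (ν m) (-(γ m)) ∂μ := by
  refine setIntegral_congr_fun hU.measurableSet (fun m hm => ?_)
  have key : -(γ m) = (mulR ((χ m)⁻¹)).comp
      (fderiv ℝ χ m - (mulL (χ m)).comp (γ₀ m)) := by
    rw [hγ m]; ext w
    simp [mulR, mulL, mul_sub]
  rw [hν m, key, hLinv t (v m) _ m hm]
end

section
/- Let n ≥ 1 and E a real normed vector space. Let χ : ℝ × ℝ × E → Matrix (Fin n) (Fin n) ℝ be twice continuously differentiable with invertible values, with variables written (ε, t, x), and let c₀ : E → (E →L[ℝ] Matrix (Fin n) (Fin n) ℝ) be a matrix-valued one-form. Define ν_ε(t,x) := (∂_tχ(ε,t,x)) * χ(ε,t,x)⁻¹, γ_ε(t,x)(w) := χ(ε,t,x) * (c₀(x) w) * χ(ε,t,x)⁻¹ − (d_xχ(ε,t,x) w) * χ(ε,t,x)⁻¹, and ζ(t,x) := (∂_εχ(ε,t,x)|_{ε=0}) * χ(0,t,x)⁻¹. Then for all (t,x) and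 all w ∈ E: ∂_ε(ν_ε(t,x))|_{ε=0} = ∂_tζ(t,x) − ⁅ν_0(t,x), ζ(t,x)⁆, and ∂_ε(γ_ε(t,x)(w))|_{ε=0} = −( (d_xζ(t,x))(w) + ⁅γ_0(t,x)(w), ζ(t,x)⁆ ). -/
open MeasureTheory

attribute [local instance] Matrix.normedAddCommGroup Matrix.normedSpace



noncomputable section EPAux

variable {n : ℕ}

instance EPclmNormedAddCommGroup {β : Type*} [NormedAddCommGroup β] [NormedSpace ℝ β] :
    NormedAddCommGroup (β →L[ℝ] Matrix (Fin n) (Fin n) ℝ) :=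
  ContinuousLinearMap.toNormedAddCommGroup

instance EPclmNormedSpace {β : Type*} [NormedAddCommGroup β] [NormedSpace ℝ β] :
    NormedSpace ℝ (β →L[ℝ] Matrix (Fin n) (Fin n) ℝ) :=
  ContinuousLinearMap.toNormedSpace

/-- Matrix multiplication as a continuous bilinear map. -/
def EPmul (n : ℕ) : Matrix (Fin n) (Fin n) ℝ →L[ℝ] Matrix (Fin n) (Fin n) ℝ →L[ℝ]
    Matrix (Fin n) (Fin n) ℝ :=
  LinearMap.toContinuousLinearMap
  { toFun := fun a => LinearMap.toContinuousLinearMap (LinearMap.mul ℝ (Matrix (Fin n) (Fin n) ℝ) a)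
    map_add' := by intros; ext; simp [add_mul]
    map_smul' := by intros; ext; simp }

@[simp] lemma EPmul_apply (a b : Matrix (Fin n) (Fin n) ℝ) : EPmul n a b = a * b := rfl

/-- Right multiplication by `b`, i.e. `(EPmulR n) b`, typed with the matrix topology. -/
def EPmulR (n : ℕ) (b : Matrix (Fin n) (Fin n) ℝ) :
    Matrix (Fin n) (Fin n) ℝ →L[ℝ] Matrix (Fin n) (Fin n) ℝ :=
  (EPmul n).flip b

@[simp] lemma EPmulR_apply (a b : Matrix (Fin n) (Fin n) ℝ) : EPmulR n b a = a * b := rfl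

lemma EPcontDiff_entry (i j : Fin n) : ContDiff ℝ (⊤ : ℕ∞) (fun A : Matrix (Fin n) (Fin n) ℝ => A i j) :=
  (LinearMap.toContinuousLinearMap (Matrix.entryLinearMap ℝ ℝ i j)).contDiff

lemma EPcontDiff_det : ContDiff ℝ (⊤ : ℕ∞) (fun A : Matrix (Fin n) (Fin n) ℝ => A.det) := by
  have : (fun A : Matrix (Fin n) (Fin n) ℝ => A.det)
      = fun A => ∑ σ : Equiv.Perm (Fin n), (Equiv.Perm.sign σ : ℝ) * ∏ i, A (σ i) i := by
    funext A; rw [Matrix.det_apply]; simp [Units.smul_def, zsmul_eq_mul]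
  rw [this]
  exact ContDiff.sum fun σ _ => ContDiff.mul contDiff_const
    (contDiff_prod fun i _ => EPcontDiff_entry _ _)

lemma EPcontDiff_updateRow (j : Fin n) (v : Fin n → ℝ) :
    ContDiff ℝ (⊤ : ℕ∞) (fun A : Matrix (Fin n) (Fin n) ℝ => A.updateRow j v) := by
  refine contDiff_pi.2 ?_
  intro k
  rcases eq_or_ne k j with h | h
  · have : (fun A : Matrix (Fin n) (Fin n) ℝ => A.updateRow j v k) = fun _ => v := by
      funext A; rw [h]; exact Matrix.updateRow_self
    rw [this]; exact contDiff_const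
  · have : (fun A : Matrix (Fin n) (Fin n) ℝ => A.updateRow j v k) = fun A => A k := by
      funext A; exact Matrix.updateRow_ne h
    rw [this]
    exact (LinearMap.toContinuousLinearMap (LinearMap.proj (R := ℝ)
      (φ := fun _ : Fin n => Fin n → ℝ) k)).contDiff

lemma EPcontDiff_adjugate : ContDiff ℝ (⊤ : ℕ∞) (fun A : Matrix (Fin n) (Fin n) ℝ => A.adjugate) := by
  refine contDiff_pi.2 ?_; intro i; rw [contDiff_pi]; intro j
  have : (fun A : Matrix (Fin n) (Fin n) ℝ => A.adjugate i j)
      = fun A => (A.updateRow j (Pi.single i 1)).det := by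
    funext A; rw [Matrix.adjugate_apply]
  rw [this]
  exact EPcontDiff_det.comp (EPcontDiff_updateRow _ _)

lemma EPcontDiffAt_inv {A : Matrix (Fin n) (Fin n) ℝ} (hA : IsUnit A) :
    ContDiffAt ℝ (⊤ : ℕ∞) (fun B : Matrix (Fin n) (Fin n) ℝ => B⁻¹) A := by
  have hdet : A.det ≠ 0 := ((Matrix.isUnit_iff_isUnit_det A).mp hA).ne_zero
  have h1 : ContDiffAt ℝ (⊤ : ℕ∞) (fun B : Matrix (Fin n) (Fin n) ℝ => (B.det)⁻¹) A :=
    (contDiffAt_inv ℝ hdet).comp A EPcontDiff_det.contDiffAt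
  have h2 : ContDiffAt ℝ (⊤ : ℕ∞) (fun B : Matrix (Fin n) (Fin n) ℝ => (B.det)⁻¹ • B.adjugate) A :=
    h1.smul EPcontDiff_adjugate.contDiffAt
  refine h2.congr_of_eventuallyEq ?_
  filter_upwards with B
  rw [Matrix.inv_def, Ring.inverse_eq_inv]

variable {α : Type*} [NormedAddCommGroup α] [NormedSpace ℝ α]

lemma EPhasFDerivAt_mul {f g : α → Matrix (Fin n) (Fin n) ℝ}
    {f' g' : α →L[ℝ] Matrix (Fin n) (Fin n) ℝ} {s : α}
    (hf : HasFDerivAt f f' s) (hg : HasFDerivAt g g' s) :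
    HasFDerivAt (fun y => f y * g y)
      (((EPmulR n) (g s)).comp f' + (EPmul n (f s)).comp g') s := by
  have h := ((EPmul n).isBoundedBilinearMap.hasFDerivAt (f s, g s)).comp s (hf.prodMk hg)
  exact h.congr_fderiv (ContinuousLinearMap.ext fun v =>
    show f s * g' v + f' v * g s = f' v * g s + f s * g' v from add_comm _ _)

lemma EPhasDerivAt_mul {f g : ℝ → Matrix (Fin n) (Fin n) ℝ}
    {f' g' : Matrix (Fin n) (Fin n) ℝ} {s : ℝ}
    (hf : HasDerivAt f f' s) (hg : HasDerivAt g g' s) :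
    HasDerivAt (fun y => f y * g y) (f' * g s + f s * g') s := by
  have h := ((EPmul n).isBoundedBilinearMap.hasFDerivAt (f s, g s)).comp_hasDerivAt s (hf.prodMk hg)
  exact h.congr_deriv (show f s * g' + f' * g s = f' * g s + f s * g' from add_comm _ _)

lemma EPhasFDerivAt_inv {f : α → Matrix (Fin n) (Fin n) ℝ}
    {f' : α →L[ℝ] Matrix (Fin n) (Fin n) ℝ} {s : α}
    (hf : HasFDerivAt f f' s) (hu : ∀ p, IsUnit (f p)) :
    HasFDerivAt (fun y => (f y)⁻¹)
      (-((EPmul n ((f s)⁻¹)).comp (((EPmulR n) ((f s)⁻¹)).comp f'))) s := by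
  set I := (f s)⁻¹ with hI
  have hdet : IsUnit (f s).det := (Matrix.isUnit_iff_isUnit_det _).mp (hu s)
  have hdiff : DifferentiableAt ℝ (fun y => (f y)⁻¹) s :=
    ((EPcontDiffAt_inv (hu s)).differentiableAt (by simp)).comp s hf.differentiableAt
  have hDf : HasFDerivAt (fun y => (f y)⁻¹) (fderiv ℝ (fun y => (f y)⁻¹) s) s :=
    hdiff.hasFDerivAt
  set D := fderiv ℝ (fun y => (f y)⁻¹) s with hD
  have hone : HasFDerivAt (fun y => f y * (f y)⁻¹)
      (((EPmulR n) I).comp f' + (EPmul n (f s)).comp D) s := EPhasFDerivAt_mul hf hDf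
  have hone' : (fun y => f y * (f y)⁻¹) = fun _ => (1 : Matrix (Fin n) (Fin n) ℝ) :=
    funext fun y => Matrix.mul_nonsing_inv _ ((Matrix.isUnit_iff_isUnit_det _).mp (hu y))
  have hzero : ((EPmulR n) I).comp f' + (EPmul n (f s)).comp D = 0 := by
    rw [hone'] at hone
    exact hone.unique (hasFDerivAt_const _ _)
  have hDv : ∀ v, D v = -(I * (f' v * I)) := by
    intro v
    have h0 : f' v * I + f s * D v = 0 := by
      have := ContinuousLinearMap.ext_iff.mp hzero v
      simpa using this
    have h1 : I * (f' v * I) + I * (f s * D v) = 0 := by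
      rw [← mul_add, h0, mul_zero]
    have h2 : I * (f s * D v) = D v := by
      rw [← mul_assoc, Matrix.nonsing_inv_mul _ hdet, one_mul]
    rw [h2] at h1
    exact eq_neg_of_add_eq_zero_right h1
  have : D = -((EPmul n I).comp (((EPmulR n) I).comp f')) := by
    ext v; simp [hDv v]
  rw [this] at hDf
  exact hDf

end EPAux

/-- Variations `δχ` of a curve in the gauge group, with `ζ = (δχ)χ⁻¹`, induce exactly the
constrained variations `δν = ζ̇ − [ν, ζ]` and `δγ = −(dζ + ad_γζ)` of the reduced
variables `ν = χ̇χ⁻¹` and `γ = χc₀χ⁻¹ + χd(χ⁻¹)` of affine Euler–Poincaré reduction. -/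
theorem variations_of_reduced_variables
    {n : ℕ} (hn : 1 ≤ n)
    {E : Type*} [NormedAddCommGroup E] [NormedSpace ℝ E]
    (χ : ℝ × ℝ × E → Matrix (Fin n) (Fin n) ℝ)
    (hχ : ContDiff ℝ 2 χ)
    (hinv : ∀ p : ℝ × ℝ × E, IsUnit (χ p))
    (c₀ : E → (E →L[ℝ] Matrix (Fin n) (Fin n) ℝ))
    (ν : ℝ → ℝ → E → Matrix (Fin n) (Fin n) ℝ)
    (hν : ∀ ε t x, ν ε t x = deriv (fun τ => χ (ε, τ, x)) t * (χ (ε, t, x))⁻¹)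
    (γ : ℝ → ℝ → E → E → Matrix (Fin n) (Fin n) ℝ)
    (hγ : ∀ ε t x w, γ ε t x w =
      χ (ε, t, x) * (c₀ x w) * (χ (ε, t, x))⁻¹
        - (fderiv ℝ (fun y => χ (ε, t, y)) x w) * (χ (ε, t, x))⁻¹)
    (ζ : ℝ → E → Matrix (Fin n) (Fin n) ℝ)
    (hζ : ∀ t x, ζ t x = deriv (fun e => χ (e, t, x)) 0 * (χ (0, t, x))⁻¹) :
    ∀ (t : ℝ) (x w : E),
      deriv (fun e => ν e t x) 0 = deriv (fun τ => ζ τ x) t - ⁅ν 0 t x, ζ t x⁆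
      ∧ deriv (fun e => γ e t x w) 0
          = -((fderiv ℝ (fun y => ζ t y) x w) + ⁅γ 0 t x w, ζ t x⁆) := by
  intro t x w
  -- the full Fréchet derivative of χ
  set F : (ℝ × ℝ × E) → (ℝ × ℝ × E) →L[ℝ] Matrix (Fin n) (Fin n) ℝ := fderiv ℝ χ with hFdef
  have hFd : ∀ p, HasFDerivAt χ (F p) p := fun p =>
    ((hχ.differentiable (by norm_num)).differentiableAt).hasFDerivAt
  have hF1 : ContDiff ℝ 1 F := hχ.fderiv_right (by norm_num)
  have hS : HasFDerivAt F (fderiv ℝ F (0, t, x)) (0, t, x) :=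
    ((hF1.differentiable one_ne_zero).differentiableAt).hasFDerivAt
  set S := fderiv ℝ F (0, t, x) with hSdef
  have hsymm : ∀ v u, S v u = S u v := fun v u => second_derivative_symmetric hFd hS v u
  -- directions
  set vε : ℝ × ℝ × E := (1, 0, 0) with hvε
  set vt : ℝ × ℝ × E := (0, 1, 0) with hvt
  set vw : ℝ × ℝ × E := (0, 0, w) with hvw
  -- curves
  have hc₁ : ∀ e : ℝ, ∀ τ : ℝ, ∀ y : E, HasDerivAt (fun e' : ℝ => (e', τ, y)) vε e :=
    fun e τ y => (hasDerivAt_id e).prodMk ((hasDerivAt_const e τ).prodMk (hasDerivAt_const e y))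
  have hc₂ : ∀ τ : ℝ, HasDerivAt (fun τ' : ℝ => ((0:ℝ), τ', x)) vt τ :=
    fun τ => (hasDerivAt_const τ (0:ℝ)).prodMk ((hasDerivAt_id τ).prodMk (hasDerivAt_const τ x))
  set ins3 : E →L[ℝ] ℝ × ℝ × E :=
    (0 : E →L[ℝ] ℝ).prod ((0 : E →L[ℝ] ℝ).prod (ContinuousLinearMap.id ℝ E)) with hins3
  have hins : ∀ u : E, ins3 u = ((0:ℝ), (0:ℝ), u) := fun u => rfl
  have hc₃ : ∀ e : ℝ, ∀ y : E, HasFDerivAt (fun y' : E => (e, t, y')) ins3 y :=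
    fun e y => (hasFDerivAt_const e y).prodMk ((hasFDerivAt_const t y).prodMk (hasFDerivAt_id y))
  -- partial derivatives of χ
  have hχt : ∀ e τ : ℝ, HasDerivAt (fun τ' => χ (e, τ', x)) (F (e, τ, x) vt) τ := fun e τ =>
    (hFd _).comp_hasDerivAt τ
      ((hasDerivAt_const τ e).prodMk ((hasDerivAt_id τ).prodMk (hasDerivAt_const τ x)))
  have hχe : ∀ τ : ℝ, ∀ y : E, HasDerivAt (fun e => χ (e, τ, y)) (F (0, τ, y) vε) 0 :=
    fun τ y => (hFd _).comp_hasDerivAt 0 (hc₁ 0 τ y)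
  have hχx : ∀ e : ℝ, ∀ y : E, HasFDerivAt (fun y' => χ (e, t, y')) ((F (e, t, y)).comp ins3) y :=
    fun e y => (hFd _).comp y (hc₃ e y)
  -- derivative of the inverse
  have hinvF : ∀ p, HasFDerivAt (fun q => (χ q)⁻¹)
      (-((EPmul n ((χ p)⁻¹)).comp (((EPmulR n) ((χ p)⁻¹)).comp (F p)))) p :=
    fun p => EPhasFDerivAt_inv (hFd p) hinv
  set I := (χ (0, t, x))⁻¹ with hIdef
  set X := F (0, t, x) vε with hX
  set T := F (0, t, x) vt with hT
  set W := F (0, t, x) vw with hW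
  have hIχ : I * χ (0, t, x) = 1 :=
    Matrix.nonsing_inv_mul _ ((Matrix.isUnit_iff_isUnit_det _).mp (hinv _))
  -- inverse along the curves
  have hIε : HasDerivAt (fun e => (χ (e, t, x))⁻¹) (-(I * (X * I))) 0 := by
    exact (hinvF (0, t, x)).comp_hasDerivAt 0 (hc₁ 0 t x)
  have hIτ : HasDerivAt (fun τ => (χ ((0:ℝ), τ, x))⁻¹) (-(I * (T * I))) t := by
    exact (hinvF (0, t, x)).comp_hasDerivAt t (hc₂ t)
  have hIx : HasFDerivAt (fun y => (χ ((0:ℝ), t, y))⁻¹)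
      ((-((EPmul n I).comp (((EPmulR n) I).comp (F (0, t, x))))).comp ins3) x :=
    by have h := (hinvF (0, t, x)).comp x (hc₃ 0 x); exact h
  -- F along the curves
  have hFε : HasDerivAt (fun e => F (e, t, x)) (S vε) 0 := hS.comp_hasDerivAt 0 (hc₁ 0 t x)
  have hFτ : HasDerivAt (fun τ => F ((0:ℝ), τ, x)) (S vt) t := hS.comp_hasDerivAt t (hc₂ t)
  have hFx : HasFDerivAt (fun y => F ((0:ℝ), t, y)) (S.comp ins3) x := hS.comp x (hc₃ 0 x)
  have hFεt : HasDerivAt (fun e => F (e, t, x) vt) (S vε vt) 0 := by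
    exact (ContinuousLinearMap.apply ℝ (Matrix (Fin n) (Fin n) ℝ) vt).hasFDerivAt.comp_hasDerivAt 0 hFε
  have hFτε : HasDerivAt (fun τ => F ((0:ℝ), τ, x) vε) (S vt vε) t := by
    exact (ContinuousLinearMap.apply ℝ (Matrix (Fin n) (Fin n) ℝ) vε).hasFDerivAt.comp_hasDerivAt t hFτ
  have hFεw : HasDerivAt (fun e => F (e, t, x) vw) (S vε vw) 0 := by
    exact (ContinuousLinearMap.apply ℝ (Matrix (Fin n) (Fin n) ℝ) vw).hasFDerivAt.comp_hasDerivAt 0 hFε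
  have hFxε : HasFDerivAt (fun y => F ((0:ℝ), t, y) vε)
      ((ContinuousLinearMap.apply ℝ (Matrix (Fin n) (Fin n) ℝ) vε).comp (S.comp ins3)) x :=
    (ContinuousLinearMap.apply ℝ (Matrix (Fin n) (Fin n) ℝ) vε).hasFDerivAt.comp x hFx
  constructor
  · -- first identity
    have hfun1 : (fun e => ν e t x) = fun e => F (e, t, x) vt * (χ (e, t, x))⁻¹ :=
      funext fun e => by erw [hν, (hχt e t).deriv]
    have hfunζ : (fun τ => ζ τ x) = fun τ => F ((0:ℝ), τ, x) vε * (χ ((0:ℝ), τ, x))⁻¹ :=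
      funext fun τ => by erw [hζ, (hχe τ x).deriv]
    have hνval : ν 0 t x = T * I := by erw [hν, (hχt 0 t).deriv]
    have hζval : ζ t x = X * I := by erw [hζ, (hχe t x).deriv]
    have hd1 : HasDerivAt (fun e => ν e t x) (S vε vt * I + T * -(I * (X * I))) 0 := by
      rw [hfun1]; exact EPhasDerivAt_mul hFεt hIε
    have hd2 : HasDerivAt (fun τ => ζ τ x) (S vt vε * I + X * -(I * (T * I))) t := by
      rw [hfunζ]; exact EPhasDerivAt_mul hFτε hIτ
    erw [hd1.deriv, hd2.deriv, hνval, hζval, Ring.lie_def, hsymm vt vε]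
    noncomm_ring
  · -- second identity
    have hfder : ∀ e : ℝ, fderiv ℝ (fun y => χ (e, t, y)) x w = F (e, t, x) vw := fun e => by
      erw [(hχx e x).fderiv]; rfl
    have hfun2 : (fun e => γ e t x w)
        = fun e => χ (e, t, x) * (c₀ x w) * (χ (e, t, x))⁻¹
            - F (e, t, x) vw * (χ (e, t, x))⁻¹ :=
      funext fun e => by rw [hγ, hfder e]
    have hγval : γ 0 t x w = χ (0, t, x) * (c₀ x w) * I - W * I := by
      rw [hγ, hfder 0]
    have hζval : ζ t x = X * I := by erw [hζ, (hχe t x).deriv]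
    have hp1 : HasDerivAt (fun e => χ (e, t, x) * (c₀ x w))
        (X * (c₀ x w) + χ (0, t, x) * 0) 0 :=
      EPhasDerivAt_mul (hχe t x) (hasDerivAt_const 0 (c₀ x w))
    have hp2 : HasDerivAt (fun e => χ (e, t, x) * (c₀ x w) * (χ (e, t, x))⁻¹)
        ((X * (c₀ x w) + χ (0, t, x) * 0) * I
          + (χ (0, t, x) * (c₀ x w)) * -(I * (X * I))) 0 :=
      EPhasDerivAt_mul hp1 hIε
    have hp3 : HasDerivAt (fun e => F (e, t, x) vw * (χ (e, t, x))⁻¹)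
        (S vε vw * I + W * -(I * (X * I))) 0 := EPhasDerivAt_mul hFεw hIε
    have hd3 : HasDerivAt (fun e => γ e t x w)
        ((X * (c₀ x w) + χ (0, t, x) * 0) * I + (χ (0, t, x) * (c₀ x w)) * -(I * (X * I))
          - (S vε vw * I + W * -(I * (X * I)))) 0 := by
      rw [hfun2]; exact hp2.sub hp3
    -- the fderiv of ζ in x
    have hfunζx : (fun y => ζ t y) = fun y => F ((0:ℝ), t, y) vε * (χ ((0:ℝ), t, y))⁻¹ :=
      funext fun y => by erw [hζ, (hχe t y).deriv]
    have hmulx := EPhasFDerivAt_mul hFxε hIx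
    have hfderζ : fderiv ℝ (fun y => ζ t y) x w = S vw vε * I + X * -(I * (W * I)) := by
      erw [hfunζx, hmulx.fderiv]
      simp [hins, hX, hW]
      rfl
    erw [hd3.deriv, hfderζ, hγval, hζval, Ring.lie_def, hsymm vw vε]
    have key : X * I * (χ (0, t, x) * (c₀ x w) * I) = X * ((c₀ x w) * I) := by
      rw [mul_assoc (χ (0, t, x)) (c₀ x w) I, mul_assoc X I, ← mul_assoc I (χ (0, t, x)), hIχ,
        one_mul]
    have expand : (χ (0, t, x) * (c₀ x w) * I - W * I) * (X * I)
          - (X * I) * (χ (0, t, x) * (c₀ x w) * I - W * I)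
        = (χ (0, t, x) * (c₀ x w) * I) * (X * I) - (W * I) * (X * I)
          - ((X * I) * (χ (0, t, x) * (c₀ x w) * I) - (X * I) * (W * I)) := by
      rw [sub_mul, mul_sub]
    rw [expand, key]
    noncomm_ring
end

section
/- Let n ≥ 1, let E be a real normed vector space, let Λ₁, Λ₂ : E → Matrix (Fin n) (Fin n) ℝ be differentiable at m ∈ E with Λ₁(m) and Λ₂(m) invertible, and let γ(m) ∈ (E →L[ℝ] Matrix (Fin n) (Fin n) ℝ). Then for every w ∈ E: (Λ₁(m)*Λ₂(m))⁻¹ * (γ(m) w) * (Λ₁(m)*Λ₂(m)) + (Λ₁(m)*Λ₂(m))⁻¹ * (d(fun x => Λ₁(x)*Λ₂(x))(m) w) = Λ₂(m)⁻¹ * ( Λ₁(m)⁻¹ * (γ(m) w) * Λ₁(m) + Λ₁(m)⁻¹ * (dΛ₁(m) w) ) * Λ₂(m) + Λ₂(m)⁻¹ * (dΛ₂(m) w). That is, θ_{Λ₁Λ₂}(γ)(m) = θ_{Λ₂}(θ_{Λ₁}(γ))(m): the affine transformation θ defines a right action of the group of invertible-matrix-valued maps on matrix-valued one-forms. -/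
open MeasureTheory

attribute [local instance] Matrix.normedAddCommGroup Matrix.normedSpace

/-- Right-action property of the affine gauge action
`θ_Λ(γ)(m)(w) = Λ(m)⁻¹ (γ(m) w) Λ(m) + Λ(m)⁻¹ (dΛ(m) w)`:
`θ_{Λ₁Λ₂}(γ)(m) = θ_{Λ₂}(θ_{Λ₁}(γ))(m)`. -/
theorem affine_action_is_right_action
    {n : ℕ} (hn : 1 ≤ n)
    {E : Type*} [NormedAddCommGroup E] [NormedSpace ℝ E]
    (Λ₁ Λ₂ : E → Matrix (Fin n) (Fin n) ℝ) (m : E)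
    (hΛ₁ : DifferentiableAt ℝ Λ₁ m) (hΛ₂ : DifferentiableAt ℝ Λ₂ m)
    (hinv₁ : IsUnit (Λ₁ m)) (hinv₂ : IsUnit (Λ₂ m))
    (γm : E →L[ℝ] Matrix (Fin n) (Fin n) ℝ) :
    ∀ w : E,
      (Λ₁ m * Λ₂ m)⁻¹ * (γm w) * (Λ₁ m * Λ₂ m)
          + (Λ₁ m * Λ₂ m)⁻¹ * (fderiv ℝ (fun x => Λ₁ x * Λ₂ x) m w)
        = (Λ₂ m)⁻¹ * ((Λ₁ m)⁻¹ * (γm w) * Λ₁ m + (Λ₁ m)⁻¹ * (fderiv ℝ Λ₁ m w)) * Λ₂ m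
          + (Λ₂ m)⁻¹ * (fderiv ℝ Λ₂ m w) := by
  intro w
  have h1 := hinv₁.invertible
  have h2 := hinv₂.invertible
  have hnpos : (0:ℝ) < n := by exact_mod_cast hn
  have hbil : IsBoundedBilinearMap ℝ
      (fun p : Matrix (Fin n) (Fin n) ℝ × Matrix (Fin n) (Fin n) ℝ => p.1 * p.2) := by
    refine ⟨fun a b c => add_mul a b c, fun r a b => smul_mul_assoc r a b,
      fun a b c => mul_add a b c, fun r a b => mul_smul_comm r a b,
      ⟨n, hnpos, fun A B => ?_⟩⟩
    rw [Matrix.norm_le_iff (by positivity)]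
    intro i j
    rw [Matrix.mul_apply]
    calc ‖∑ k, A i k * B k j‖ ≤ ∑ k, ‖A i k * B k j‖ := norm_sum_le _ _
      _ ≤ ∑ _k : Fin n, ‖A‖ * ‖B‖ := by
          refine Finset.sum_le_sum fun k _ => ?_
          rw [norm_mul]
          exact mul_le_mul (A.norm_entry_le_entrywise_sup_norm)
            (B.norm_entry_le_entrywise_sup_norm) (norm_nonneg _) (norm_nonneg _)
      _ = n * ‖A‖ * ‖B‖ := by simp [mul_assoc]
  have hfd := (hbil.hasFDerivAt (Λ₁ m, Λ₂ m)).comp m (HasFDerivAt.prodMk hΛ₁.hasFDerivAt hΛ₂.hasFDerivAt)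
  have key : fderiv ℝ (fun x => Λ₁ x * Λ₂ x) m w
      = (fderiv ℝ Λ₁ m w) * Λ₂ m + Λ₁ m * (fderiv ℝ Λ₂ m w) := by
    have hfd2 : HasFDerivAt (fun x => Λ₁ x * Λ₂ x)
        ((hbil.deriv (Λ₁ m, Λ₂ m)).comp ((fderiv ℝ Λ₁ m).prod (fderiv ℝ Λ₂ m))) m := hfd
    rw [show fderiv ℝ (fun x => Λ₁ x * Λ₂ x) m = _ from HasFDerivAt.fderiv hfd2]
    simp [hbil.deriv_apply, add_comm]
    exact rfl
  rw [key, Matrix.mul_inv_rev]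
  simp only [mul_add, add_mul, mul_assoc, Matrix.inv_mul_cancel_left_of_invertible]
  abel
end
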